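/- arXiv:2111.06026 — 9 statements merged into one kernel-verified Lean document; each statement's English description precedes it below -/
import Mathlib

section
/- For t ≥ 2, in the graph G_t, no minimal connected dominating set contains more than two vertices of X. -/
open SimpleGraph

/-- `D` is a connected dominating set of `G`. -/
def IsCDS {V : Type*} (G : SimpleGraph V) (D : Set V) : Prop :=
  (∀ v, v ∈ D ∨ ∃ u ∈ D, G.Adj u v) ∧ (G.induce D).Connected

/-- `D` is a minimal connected dominating set of `G`. -/
def IsMinCDS {V : Type*} (G : SimpleGraph V) (D : Set V) : Prop :=
  IsCDS G D ∧ ∀ D' : Set V, D' ⊂ D → ¬ IsCDS G D'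

/-- Vertex type of `G_t`: `X = inl i`, `Y = inr (inl j)`, `z = inr (inr ())`. -/
abbrev Vt (t : ℕ) := Fin t ⊕ Fin t ⊕ Unit

/-- Base relation of `G_t` (with the clique on `X`). -/
def GtRel (t : ℕ) : Vt t → Vt t → Prop
  | Sum.inl i, Sum.inl j => i ≠ j
  | Sum.inl i, Sum.inr (Sum.inl j) => i ≠ j
  | Sum.inr (Sum.inl _), Sum.inr (Sum.inr _) => True
  | _, _ => False

/-- Base relation of `G_t - E(X)` (no edges inside `X`). -/
def GtRel' (t : ℕ) : Vt t → Vt t → Prop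
  | Sum.inl i, Sum.inr (Sum.inl j) => i ≠ j
  | Sum.inr (Sum.inl _), Sum.inr (Sum.inr _) => True
  | _, _ => False

/-- The graph `G_t`. -/
def Gt (t : ℕ) : SimpleGraph (Vt t) := SimpleGraph.fromRel (GtRel t)

/-- Vertex type of `G_t^k`: `k` copies of `Vt t` plus a hub vertex `s = inr ()`. -/
abbrev Vtk (t k : ℕ) := (Fin k × Vt t) ⊕ Unit

/-- Relation of `G_t^k` built from a base relation on copies; the hub `s`
is adjacent to all `X`-vertices of all copies. -/
def GtkRel (t k : ℕ) (base : Vt t → Vt t → Prop) : Vtk t k → Vtk t k → Prop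
  | Sum.inl (c, u), Sum.inl (c', u') => c = c' ∧ base u u'
  | Sum.inl (_, Sum.inl _), Sum.inr _ => True
  | Sum.inr _, Sum.inl (_, Sum.inl _) => True
  | _, _ => False

/-- The graph `G_t^k` (copies of `G_t` with clique on `X`). -/
def Gtk (t k : ℕ) : SimpleGraph (Vtk t k) := SimpleGraph.fromRel (GtkRel t k (GtRel t))

/-- The graph `G_t^k` with the edges inside each `X`-set removed. -/
def Gtk' (t k : ℕ) : SimpleGraph (Vtk t k) := SimpleGraph.fromRel (GtkRel t k (GtRel' t))

lemma Gt_adj_XX {t : ℕ} {i j : Fin t} (h : i ≠ j) :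
    (Gt t).Adj (Sum.inl i) (Sum.inl j) := by
  rw [Gt, SimpleGraph.fromRel_adj]
  exact ⟨by simp [h], Or.inl h⟩

lemma Gt_adj_XY {t : ℕ} {i j : Fin t} (h : i ≠ j) :
    (Gt t).Adj (Sum.inl i) (Sum.inr (Sum.inl j)) := by
  rw [Gt, SimpleGraph.fromRel_adj]
  exact ⟨by simp, Or.inl h⟩

lemma Gt_adj_YZ {t : ℕ} {j : Fin t} {u : Unit} :
    (Gt t).Adj (Sum.inr (Sum.inl j)) (Sum.inr (Sum.inr u)) := by
  rw [Gt, SimpleGraph.fromRel_adj]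
  exact ⟨by simp, Or.inl trivial⟩

lemma Gt_adj_Z {t : ℕ} {v : Vt t} {u : Unit}
    (h : (Gt t).Adj v (Sum.inr (Sum.inr u))) : ∃ j, v = Sum.inr (Sum.inl j) := by
  rw [Gt, SimpleGraph.fromRel_adj] at h
  rcases v with i | j | w
  · simp [GtRel] at h
  · exact ⟨j, rfl⟩
  · simp [GtRel] at h

theorem minCDS_at_most_two_X_vertices (t : ℕ) (ht : 2 ≤ t) (D : Set (Vt t))
    (hD : IsMinCDS (Gt t) D) : {i : Fin t | Sum.inl i ∈ D}.ncard ≤ 2 := by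
  by_contra h
  push_neg at h
  rw [Set.two_lt_ncard_iff (Set.toFinite _)] at h
  obtain ⟨a, b, c, ha, hb, hc, hab, hac, hbc⟩ := h
  simp only [Set.mem_setOf_eq] at ha hb hc
  obtain ⟨⟨hdom, hconn⟩, hmin⟩ := hD
  set D' : Set (Vt t) := D \ {Sum.inl a} with hD'def
  refine hmin D' (Set.sdiff_singleton_ssubset.2 ha) ?_
  have hb' : Sum.inl b ∈ D' :=
    ⟨hb, by simp only [Set.mem_singleton_iff, Sum.inl.injEq]; exact fun h => hab h.symm⟩
  have hc' : Sum.inl c ∈ D' :=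
    ⟨hc, by simp only [Set.mem_singleton_iff, Sum.inl.injEq]; exact fun h => hac h.symm⟩
  constructor
  · -- domination
    intro v
    rcases v with i | j | u
    · by_cases hib : i = b
      · exact Or.inl (hib ▸ hb')
      · exact Or.inr ⟨Sum.inl b, hb', Gt_adj_XX (fun h => hib h.symm)⟩
    · by_cases hjb : j = b
      · exact Or.inr ⟨Sum.inl c, hc', Gt_adj_XY (hjb ▸ hbc.symm)⟩
      · exact Or.inr ⟨Sum.inl b, hb', Gt_adj_XY (fun h => hjb h.symm)⟩
    · rcases hdom (Sum.inr (Sum.inr u)) with hz | ⟨w, hw, hadj⟩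
      · exact Or.inl ⟨hz, by simp⟩
      · obtain ⟨j, rfl⟩ := Gt_adj_Z hadj
        exact Or.inr ⟨_, ⟨hw, by simp⟩, hadj⟩
  · -- connectivity
    have xstep : ∀ (i : Fin t) (hi : Sum.inl i ∈ D'),
        ((Gt t).induce D').Reachable ⟨Sum.inl i, hi⟩ ⟨Sum.inl b, hb'⟩ := by
      intro i hi
      by_cases hib : i = b
      · subst hib; exact Reachable.refl _
      · exact Adj.reachable (by simpa using Gt_adj_XX hib)
    have ystep : ∀ (j : Fin t) (hj : Sum.inr (Sum.inl j) ∈ D'),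
        ((Gt t).induce D').Reachable ⟨Sum.inr (Sum.inl j), hj⟩ ⟨Sum.inl b, hb'⟩ := by
      intro j hj
      by_cases hjb : j = b
      · have h1 : ((Gt t).induce D').Adj ⟨Sum.inr (Sum.inl j), hj⟩ ⟨Sum.inl c, hc'⟩ := by
          simpa using (Gt_adj_XY (hjb ▸ hbc.symm)).symm
        exact h1.reachable.trans (xstep c hc')
      · exact Adj.reachable
          (by simpa using (Gt_adj_XY (show b ≠ j from fun h => hjb h.symm)).symm)
    have key : ∀ v : D', ((Gt t).induce D').Reachable v ⟨Sum.inl b, hb'⟩ := by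
      rintro ⟨(i | j | u), hv⟩
      · exact xstep i hv
      · exact ystep j hv
      · -- z
        have hz : (Sum.inr (Sum.inr u) : Vt t) ∈ D := hv.1
        obtain ⟨w⟩ := hconn.preconnected ⟨Sum.inr (Sum.inr u), hz⟩ ⟨Sum.inl b, hb⟩
        cases w with
        | cons hadj p =>
          rename_i v2
          have hgt : (Gt t).Adj (v2 : Vt t) (Sum.inr (Sum.inr u)) := by
            have := hadj
            simp only [comap_adj, Function.Embedding.coe_subtype] at this
            exact this.symm
          obtain ⟨j, hj⟩ := Gt_adj_Z hgt
          have hjD' : Sum.inr (Sum.inl j) ∈ D' := ⟨hj ▸ v2.2, by simp⟩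
          have h1 : ((Gt t).induce D').Adj ⟨Sum.inr (Sum.inr u), hv⟩
              ⟨Sum.inr (Sum.inl j), hjD'⟩ := by simpa using Gt_adj_YZ.symm
          exact h1.reachable.trans (ystep j hjD')
    haveI : Nonempty ↥D' := ⟨⟨Sum.inl b, hb'⟩⟩
    exact ⟨fun v w => (key v).trans (key w).symm⟩
end

section
/- For t ≥ 3 and any index i, and any j ≠ i, the set {x_i, y_j, z} is a minimal connected dominating set of G_t. -/
open SimpleGraph

theorem xi_yj_z_isMinCDS (t : ℕ) (ht : 3 ≤ t) (i j : Fin t) (hij : j ≠ i) :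
    IsMinCDS (Gt t)
      {Sum.inl i, Sum.inr (Sum.inl j), Sum.inr (Sum.inr ())} := by
  set a : Vt t := Sum.inl i with ha
  set b : Vt t := Sum.inr (Sum.inl j) with hb
  set c : Vt t := Sum.inr (Sum.inr ()) with hc
  set D : Set (Vt t) := {a, b, c} with hD
  have haD : a ∈ D := by simp [hD]
  have hbD : b ∈ D := by simp [hD]
  have hcD : c ∈ D := by simp [hD]
  have hab : (Gt t).Adj a b := by simp [Gt, GtRel, ha, hb, hij.symm]
  have hbc : (Gt t).Adj b c := by simp [Gt, GtRel, hb, hc]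
  constructor
  · constructor
    · -- dominating
      intro v
      match v with
      | Sum.inl k =>
        by_cases hk : k = i
        · subst hk; exact Or.inl haD
        · exact Or.inr ⟨a, haD, by simp [Gt, GtRel, ha, Ne.symm hk, hk]⟩
      | Sum.inr (Sum.inl k) =>
        exact Or.inr ⟨c, hcD, by simp [Gt, GtRel, hc]⟩
      | Sum.inr (Sum.inr ()) => exact Or.inl hcD
    · -- connected
      rw [SimpleGraph.connected_iff]
      refine ⟨?_, ⟨⟨b, hbD⟩⟩⟩
      have key : ∀ u : D, ((Gt t).induce D).Reachable u ⟨b, hbD⟩ := by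
        rintro ⟨u, hu⟩
        have : u = a ∨ u = b ∨ u = c := by simpa [hD] using hu
        rcases this with rfl | rfl | rfl
        · exact SimpleGraph.Adj.reachable (by exact hab)
        · exact SimpleGraph.Reachable.refl _
        · exact (SimpleGraph.Adj.reachable (by exact hbc)).symm
      intro u v
      exact (key u).trans (key v).symm
  · -- minimality
    rintro D' ⟨hsub, hne⟩ ⟨hdom, hconn⟩
    have hmem : ∀ v ∈ D', v = a ∨ v = b ∨ v = c := by
      intro v hv; simpa [hD] using hsub hv
    obtain ⟨w, hwD, hwD'⟩ := Set.not_subset.mp hne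
    have hw : w = a ∨ w = b ∨ w = c := by simpa [hD] using hwD
    rcases hw with rfl | rfl | rfl
    · -- a = x_i missing: x_j is undominated
      rcases hdom (Sum.inl j) with h | ⟨u, huD', hadj⟩
      · rcases hmem _ h with h' | h' | h'
        · exact hij (Sum.inl.inj h')
        · simp [hb] at h'
        · simp [hc] at h'
      · rcases hmem _ huD' with rfl | rfl | rfl
        · exact hwD' huD'
        · simp [Gt, GtRel, hb] at hadj
        · simp [Gt, GtRel, hc] at hadj
    · -- b = y_j missing
      by_cases hcD' : c ∈ D'
      · by_cases haD' : a ∈ D'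
        · -- D' ⊆ {a, c}, not connected
          have noadj : ∀ u v : D', ¬ ((Gt t).induce D').Adj u v := by
            rintro ⟨u, hu⟩ ⟨v, hv⟩ hadj
            have hu' := hmem u hu
            have hv' := hmem v hv
            have huab : u = a ∨ u = c := by
              rcases hu' with h | h | h
              · exact Or.inl h
              · exact absurd (h ▸ hu) hwD'
              · exact Or.inr h
            have hvab : v = a ∨ v = c := by
              rcases hv' with h | h | h
              · exact Or.inl h
              · exact absurd (h ▸ hv) hwD'
              · exact Or.inr h
            have hadj' : (Gt t).Adj u v := hadj
            rcases huab with rfl | rfl <;> rcases hvab with rfl | rfl <;>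
              simp [Gt, GtRel, ha, hc] at hadj'
          have hbot : (Gt t).induce D' = ⊥ := by
            ext u v
            simp only [SimpleGraph.bot_adj, iff_false]
            exact noadj u v
          have hr := hconn.preconnected ⟨a, haD'⟩ ⟨c, hcD'⟩
          rw [hbot, SimpleGraph.reachable_bot] at hr
          exact absurd (congrArg Subtype.val hr) (by simp [ha, hc])
        · -- a ∉ D': a undominated
          rcases hdom a with h | ⟨u, huD', hadj⟩
          · exact haD' h
          · rcases hmem _ huD' with rfl | rfl | rfl
            · exact haD' huD'
            · exact hwD' huD'
            · simp [Gt, GtRel, ha, hc] at hadj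
      · -- c ∉ D': c undominated
        rcases hdom c with h | ⟨u, huD', hadj⟩
        · exact hcD' h
        · rcases hmem _ huD' with rfl | rfl | rfl
          · simp [Gt, GtRel, ha, hc] at hadj
          · exact hwD' huD'
          · exact hcD' huD'
    · -- c = z missing: y_i undominated
      rcases hdom (Sum.inr (Sum.inl i)) with h | ⟨u, huD', hadj⟩
      · rcases hmem _ h with h' | h' | h'
        · simp [ha] at h'
        · exact hij (Sum.inl.inj (Sum.inr.inj h')).symm
        · simp [hc] at h'
      · rcases hmem _ huD' with rfl | rfl | rfl
        · simp [Gt, GtRel, ha] at hadj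
        · simp [Gt, GtRel, hb] at hadj
        · exact hwD' huD'
end

section
/- For t ≥ 3, for any two distinct indices i ≠ j and any index k, the set {x_i, x_j, y_k} is a minimal connected dominating set of G_t. -/
open SimpleGraph

lemma gt_adj_iff {t : ℕ} {u v : Vt t} :
    (Gt t).Adj u v ↔ u ≠ v ∧ (GtRel t u v ∨ GtRel t v u) := by
  simp [Gt, fromRel_adj]

lemma not_cds_sub (t : ℕ) (a k : Fin t) (D' : Set (Vt t))
    (hsub : D' ⊆ {Sum.inl a, Sum.inr (Sum.inl k)}) : ¬ IsCDS (Gt t) D' := by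
  rintro ⟨hdom, hconn⟩
  by_cases hak : a = k
  · subst hak
    by_cases hx : (Sum.inl a : Vt t) ∈ D'
    · by_cases hy : (Sum.inr (Sum.inl a) : Vt t) ∈ D'
      · -- both in; induced graph has no edges
        have hbot : (Gt t).induce D' = ⊥ := by
          ext ⟨u, hu⟩ ⟨v, hv⟩
          simp only [comap_adj, Function.Embedding.coe_subtype, bot_adj, iff_false]
          rcases hsub hu with hu' | hu' <;> rcases hsub hv with hv' | hv' <;>
            subst hu' <;> subst hv' <;> simp [gt_adj_iff, GtRel]
        rw [hbot] at hconn
        have := hconn.preconnected ⟨Sum.inl a, hx⟩ ⟨Sum.inr (Sum.inl a), hy⟩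
        rw [reachable_bot] at this
        simpa using congrArg Subtype.val this
      · -- y_a not in D', so z undominated
        rcases hdom (Sum.inr (Sum.inr ())) with h | ⟨u, hu, hadj⟩
        · rcases hsub h with h | h <;> simp_all
        · rcases hsub hu with h | h <;> subst h
          · rw [gt_adj_iff] at hadj; simp [GtRel] at hadj
          · exact hy hu
    · -- x_a not in D', so x_a undominated (adj y_a x_a is false)
      rcases hdom (Sum.inl a) with h | ⟨u, hu, hadj⟩
      · exact hx h
      · rcases hsub hu with h | h <;> subst h
        · exact hx hu
        · rw [gt_adj_iff] at hadj; simp [GtRel] at hadj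
  · -- a ≠ k : y_a undominated
    rcases hdom (Sum.inr (Sum.inl a)) with h | ⟨u, hu, hadj⟩
    · rcases hsub h with h | h
      · simp at h
      · simp at h; exact hak h
    · rcases hsub hu with h | h <;> subst h <;>
        (rw [gt_adj_iff] at hadj; simp [GtRel] at hadj)

theorem xi_xj_yk_isMinCDS (t : ℕ) (ht : 3 ≤ t) (i j k : Fin t) (hij : i ≠ j) :
    IsMinCDS (Gt t) {Sum.inl i, Sum.inl j, Sum.inr (Sum.inl k)} := by
  set D : Set (Vt t) := {Sum.inl i, Sum.inl j, Sum.inr (Sum.inl k)} with hD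
  have hxy : ∀ a : Fin t, a ≠ k → (Gt t).Adj (Sum.inl a) (Sum.inr (Sum.inl k)) := by
    intro a h
    rw [gt_adj_iff]
    exact ⟨by simp, Or.inl h⟩
  have hxx : (Gt t).Adj (Sum.inl i) (Sum.inl j) := by
    rw [gt_adj_iff]
    exact ⟨by simp [hij], Or.inl hij⟩
  constructor
  · constructor
    · -- domination
      intro v
      match v with
      | Sum.inl l =>
        by_cases hl : l = i
        · exact Or.inl (by simp [hD, hl])
        · refine Or.inr ⟨Sum.inl i, by simp [hD], ?_⟩
          rw [gt_adj_iff]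
          exact ⟨by simp [Ne.symm hl], Or.inl (Ne.symm hl)⟩
      | Sum.inr (Sum.inl l) =>
        by_cases hl : l = i
        · refine Or.inr ⟨Sum.inl j, by simp [hD], ?_⟩
          rw [gt_adj_iff]
          exact ⟨by simp, Or.inl (show j ≠ l by rw [hl]; exact Ne.symm hij)⟩
        · refine Or.inr ⟨Sum.inl i, by simp [hD], ?_⟩
          rw [gt_adj_iff]
          exact ⟨by simp, Or.inl (Ne.symm hl)⟩
      | Sum.inr (Sum.inr ()) =>
        refine Or.inr ⟨Sum.inr (Sum.inl k), by simp [hD], ?_⟩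
        rw [gt_adj_iff]
        exact ⟨by simp, Or.inl trivial⟩
    · -- connectivity of induced graph
      have hxi : (Sum.inl i : Vt t) ∈ D := by simp [hD]
      have hxj : (Sum.inl j : Vt t) ∈ D := by simp [hD]
      have hyk : (Sum.inr (Sum.inl k) : Vt t) ∈ D := by simp [hD]
      set G' := (Gt t).induce D with hG'
      have adj_of : ∀ (u v : Vt t) (hu : u ∈ D) (hv : v ∈ D),
          (Gt t).Adj u v → G'.Adj ⟨u, hu⟩ ⟨v, hv⟩ := by
        intro u v hu hv h
        simpa [hG'] using h
      have rij : G'.Reachable ⟨Sum.inl i, hxi⟩ ⟨Sum.inl j, hxj⟩ :=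
        (adj_of _ _ _ _ hxx).reachable
      have rik : G'.Reachable ⟨Sum.inl i, hxi⟩ ⟨Sum.inr (Sum.inl k), hyk⟩ := by
        by_cases hik : i = k
        · have hjk : j ≠ k := hik ▸ Ne.symm hij
          exact rij.trans (adj_of _ _ _ _ (hxy j hjk)).reachable
        · exact (adj_of _ _ _ _ (hxy i hik)).reachable
      have key : ∀ w : {x // x ∈ D}, G'.Reachable w ⟨Sum.inl i, hxi⟩ := by
        rintro ⟨w, hw⟩
        rcases hw with h | h | h
        · subst h; exact Reachable.refl _
        · subst h; exact rij.symm
        · subst h; exact rik.symm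
      have : Nonempty {x // x ∈ D} := ⟨⟨Sum.inl i, hxi⟩⟩
      exact ⟨fun u v => (key u).trans (key v).symm⟩
  · -- minimality
    intro D' hD'
    by_cases hyk : (Sum.inr (Sum.inl k) : Vt t) ∈ D'
    · have : (Sum.inl i : Vt t) ∉ D' ∨ (Sum.inl j : Vt t) ∉ D' := by
        by_contra h
        push_neg at h
        refine hD'.2 ?_
        intro v hv
        rcases hv with h' | h' | h' <;> subst h' <;> simp_all
      rcases this with hi | hj
      · refine not_cds_sub t j k D' ?_
        intro v hv
        have := hD'.1 hv
        rcases this with h | h | h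
        · exact absurd (h ▸ hv) hi
        · exact Or.inl h
        · exact Or.inr h
      · refine not_cds_sub t i k D' ?_
        intro v hv
        have := hD'.1 hv
        rcases this with h | h | h
        · exact Or.inl h
        · exact absurd (h ▸ hv) hj
        · exact Or.inr h
    · -- z undominated
      rintro ⟨hdom, hconn⟩
      rcases hdom (Sum.inr (Sum.inr ())) with h | ⟨u, hu, hadj⟩
      · rcases hD'.1 h with h' | h' | h' <;> simp_all
      · rcases hD'.1 hu with h' | h' | h'
        · subst h'; rw [gt_adj_iff] at hadj; simp [GtRel] at hadj
        · subst h'; rw [gt_adj_iff] at hadj; simp [GtRel] at hadj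
        · exact hyk (h' ▸ hu)
end

section
/- For t ≥ 3, the number of minimal connected dominating sets of G_t that intersect X is exactly (t³ + t²)/2 − t. -/
open SimpleGraph

namespace CDSAux
variable {t : ℕ}
abbrev xx (i : Fin t) : Vt t := Sum.inl i
abbrev yy (i : Fin t) : Vt t := Sum.inr (Sum.inl i)
abbrev zz : Vt t := Sum.inr (Sum.inr ())

@[simp] lemma adj_xx_xx {i j : Fin t} : (Gt t).Adj (xx i) (xx j) ↔ i ≠ j := by
  simp [Gt, SimpleGraph.fromRel_adj, GtRel]; tauto
@[simp] lemma adj_xx_yy {i j : Fin t} : (Gt t).Adj (xx i) (yy j) ↔ i ≠ j := by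
  simp [Gt, SimpleGraph.fromRel_adj, GtRel]
@[simp] lemma adj_yy_xx {i j : Fin t} : (Gt t).Adj (yy j) (xx i) ↔ i ≠ j := by
  rw [adj_comm]; exact adj_xx_yy
@[simp] lemma adj_xx_zz {i : Fin t} : ¬ (Gt t).Adj (xx i) zz := by
  simp [Gt, SimpleGraph.fromRel_adj, GtRel]
@[simp] lemma adj_zz_xx {i : Fin t} : ¬ (Gt t).Adj zz (xx i) := by
  rw [adj_comm]; exact adj_xx_zz
@[simp] lemma adj_yy_yy {i j : Fin t} : ¬ (Gt t).Adj (yy i) (yy j) := by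
  simp [Gt, SimpleGraph.fromRel_adj, GtRel]
@[simp] lemma adj_yy_zz {j : Fin t} : (Gt t).Adj (yy j) zz := by
  simp [Gt, SimpleGraph.fromRel_adj, GtRel]
@[simp] lemma adj_zz_yy {j : Fin t} : (Gt t).Adj zz (yy j) := adj_yy_zz.symm
@[simp] lemma adj_zz_zz : ¬ (Gt t).Adj (zz : Vt t) zz := SimpleGraph.irrefl _

section Helpers
variable {V : Type*} {G : SimpleGraph V} {D : Set V}

lemma reach_eq_of_isolated {v w : V} (h : ∀ u, ¬ G.Adj v u) (r : G.Reachable v w) : v = w := by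
  obtain ⟨p⟩ := r
  cases p with
  | nil => rfl
  | cons h' _ => exact absurd h' (h _)

lemma connected_of_center {c : V} (hc : c ∈ D)
    (h : ∀ v ∈ D, v = c ∨ G.Adj c v) : (G.induce D).Connected := by
  rw [connected_iff_exists_forall_reachable]
  refine ⟨⟨c, hc⟩, ?_⟩
  rintro ⟨w, hw⟩
  rcases h w hw with h' | h'
  · subst h'; rfl
  · exact SimpleGraph.Adj.reachable (by simpa using h')

lemma not_connected_of_isolated {v w : V} (hv : v ∈ D) (hw : w ∈ D) (hne : v ≠ w)
    (h : ∀ u ∈ D, ¬ G.Adj v u) : ¬ (G.induce D).Connected := by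
  intro hconn
  have r := hconn.preconnected ⟨v, hv⟩ ⟨w, hw⟩
  have := reach_eq_of_isolated (G := G.induce D) (v := ⟨v, hv⟩) ?_ r
  · exact hne (congrArg Subtype.val this)
  · rintro ⟨u, hu⟩ hadj
    exact h u hu (by simpa using hadj)

lemma exists_nbr_of_connected {v w : V} (hconn : (G.induce D).Connected)
    (hv : v ∈ D) (hw : w ∈ D) (hne : v ≠ w) : ∃ u ∈ D, G.Adj v u := by
  by_contra hno
  push_neg at hno
  exact not_connected_of_isolated hv hw hne hno hconn

end Helpers

lemma cdsA {a b : Fin t} (j : Fin t) (hab : a ≠ b) :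
    IsCDS (Gt t) {xx a, xx b, yy j} := by
  constructor
  · rintro (k | k | ⟨⟩)
    · by_cases hk : k = a
      · exact Or.inl (by simp [hk])
      · exact Or.inr ⟨xx a, by simp, by simp [Ne.symm hk]⟩
    · by_cases hk : k = a
      · exact Or.inr ⟨xx b, by simp, by simp [hk, Ne.symm hab]⟩
      · exact Or.inr ⟨xx a, by simp, by simp [Ne.symm hk]⟩
    · exact Or.inr ⟨yy j, by simp, adj_yy_zz⟩
  · by_cases hja : j = a
    · apply connected_of_center (c := xx b) (by simp)
      rintro v (rfl | rfl | rfl)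
      · exact Or.inr (by simp [Ne.symm hab])
      · exact Or.inl rfl
      · exact Or.inr (by simp [hja, Ne.symm hab])
    · apply connected_of_center (c := xx a) (by simp)
      rintro v (rfl | rfl | rfl)
      · exact Or.inl rfl
      · exact Or.inr (by simp [hab])
      · exact Or.inr (adj_xx_yy.mpr (Ne.symm hja))

lemma cdsB {i j : Fin t} (hij : i ≠ j) :
    IsCDS (Gt t) {xx i, yy j, zz} := by
  constructor
  · rintro (k | k | ⟨⟩)
    · by_cases hk : k = i
      · exact Or.inl (by simp [hk])
      · exact Or.inr ⟨xx i, by simp, adj_xx_xx.mpr (Ne.symm hk)⟩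
    · exact Or.inr ⟨zz, by simp, adj_zz_yy⟩
    · exact Or.inr ⟨yy j, by simp, adj_yy_zz⟩
  · apply connected_of_center (c := yy j) (by simp)
    rintro v (rfl | rfl | rfl)
    · exact Or.inr (adj_yy_xx.mpr hij)
    · exact Or.inl rfl
    · exact Or.inr adj_yy_zz


-- no subset of two X-vertices is a CDS (z undominated)
lemma notCDS_xx_xx {a b : Fin t} {D' : Set (Vt t)} (hsub : D' ⊆ {xx a, xx b}) :
    ¬ IsCDS (Gt t) D' := by
  rintro ⟨hdom, -⟩
  rcases hdom zz with hz | ⟨u, hu, hadj⟩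
  · rcases hsub hz with h | h <;> simp at h
  · rcases hsub hu with rfl | rfl <;> exact adj_xx_zz hadj

lemma notCDS_xx_yy {a j : Fin t} {D' : Set (Vt t)} (hsub : D' ⊆ {xx a, yy j}) :
    ¬ IsCDS (Gt t) D' := by
  rintro ⟨hdom, hconn⟩
  -- z must be dominated via y j
  have hyj : yy j ∈ D' := by
    rcases hdom zz with hz | ⟨u, hu, hadj⟩
    · rcases hsub hz with h | h <;> simp at h
    · rcases hsub hu with rfl | rfl
      · exact absurd hadj adj_xx_zz
      · exact hu
  by_cases hja : j = a
  · subst hja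
    -- x j must be in D' and is then isolated
    have hxj : xx j ∈ D' := by
      rcases hdom (xx j) with h | ⟨u, hu, hadj⟩
      · exact h
      · rcases hsub hu with rfl | rfl
        · exact absurd hadj (by simp)
        · exact absurd hadj (by simp)
    exact not_connected_of_isolated hxj hyj (by simp)
      (fun u hu hadj => by rcases hsub hu with rfl | rfl <;> simp at hadj) hconn
  · -- y a undominated
    rcases hdom (yy a) with h | ⟨u, hu, hadj⟩
    · rcases hsub h with h' | h' <;> simp at h'
      exact hja h'.symm
    · rcases hsub hu with rfl | rfl
      · exact absurd hadj (by simp [Ne.symm hja])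
        -- adj xx a (yy a) false
      · exact absurd hadj adj_yy_yy

lemma notCDS_xx_zz {i : Fin t} {D' : Set (Vt t)} (hsub : D' ⊆ {xx i, zz}) :
    ¬ IsCDS (Gt t) D' := by
  rintro ⟨hdom, hconn⟩
  have hz : zz ∈ D' := by
    rcases hdom zz with h | ⟨u, hu, hadj⟩
    · exact h
    · rcases hsub hu with rfl | rfl
      · exact absurd hadj adj_xx_zz
      · exact absurd hadj adj_zz_zz
  have hx : xx i ∈ D' := by
    rcases hdom (xx i) with h | ⟨u, hu, hadj⟩
    · exact h
    · rcases hsub hu with rfl | rfl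
      · exact absurd hadj ((Gt t).irrefl)
      · exact absurd hadj adj_zz_xx
  exact not_connected_of_isolated hz hx (by simp)
    (fun u hu hadj => by rcases hsub hu with rfl | rfl <;> simp at hadj) hconn

lemma notCDS_yy_zz {j : Fin t} {D' : Set (Vt t)} (hsub : D' ⊆ {yy j, zz}) :
    ¬ IsCDS (Gt t) D' := by
  rintro ⟨hdom, -⟩
  rcases hdom (xx j) with h | ⟨u, hu, hadj⟩
  · rcases hsub h with h' | h' <;> simp at h'
  · rcases hsub hu with rfl | rfl
    · exact (adj_yy_xx.mp hadj) rfl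
    · exact adj_zz_xx hadj

lemma minA {a b : Fin t} (j : Fin t) (hab : a ≠ b) :
    IsMinCDS (Gt t) {xx a, xx b, yy j} := by
  refine ⟨cdsA j hab, fun D' hss => ?_⟩
  obtain ⟨e, he, heD⟩ := Set.exists_of_ssubset hss
  have hsub := hss.1
  rcases he with rfl | rfl | rfl
  · refine notCDS_xx_yy (a := b) (j := j) (fun v hv => ?_)
    rcases hsub hv with rfl | rfl | rfl
    · exact absurd hv heD
    · simp
    · simp
  · refine notCDS_xx_yy (a := a) (j := j) (fun v hv => ?_)
    rcases hsub hv with rfl | rfl | rfl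
    · simp
    · exact absurd hv heD
    · simp
  · refine notCDS_xx_xx (a := a) (b := b) (fun v hv => ?_)
    rcases hsub hv with rfl | rfl | rfl
    · simp
    · simp
    · exact absurd hv heD

lemma minB {i j : Fin t} (hij : i ≠ j) :
    IsMinCDS (Gt t) {xx i, yy j, zz} := by
  refine ⟨cdsB hij, fun D' hss => ?_⟩
  obtain ⟨e, he, heD⟩ := Set.exists_of_ssubset hss
  have hsub := hss.1
  rcases he with rfl | rfl | rfl
  · refine notCDS_yy_zz (j := j) (fun v hv => ?_)
    rcases hsub hv with rfl | rfl | rfl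
    · exact absurd hv heD
    · simp
    · simp
  · refine notCDS_xx_zz (i := i) (fun v hv => ?_)
    rcases hsub hv with rfl | rfl | rfl
    · simp
    · exact absurd hv heD
    · simp
  · refine notCDS_xx_yy (a := i) (j := j) (fun v hv => ?_)
    rcases hsub hv with rfl | rfl | rfl
    · simp
    · simp
    · exact absurd hv heD


lemma eq_of_cds_subset {D S : Set (Vt t)} (hD : IsMinCDS (Gt t) D)
    (hsub : S ⊆ D) (hS : IsCDS (Gt t) S) : D = S := by
  by_contra hne
  exact hD.2 S (hsub.ssubset_of_ne (fun h => hne h.symm)) hS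

lemma charact {D : Set (Vt t)} (hD : IsMinCDS (Gt t) D) {a : Fin t} (ha : xx a ∈ D) :
    (∃ a b j, a ≠ b ∧ D = {xx a, xx b, yy j}) ∨ (∃ i j, i ≠ j ∧ D = {xx i, yy j, zz}) := by
  obtain ⟨⟨hdom, hconn⟩, hmin⟩ := hD
  by_cases hz : zz ∈ D
  · -- z ∈ D; z has a neighbour in D, necessarily some y j
    obtain ⟨u, hu, hadj⟩ :=
      exists_nbr_of_connected hconn hz ha (by simp)
    obtain ⟨j, hj⟩ : ∃ j, yy j ∈ D := by
      rcases u with k | k | ⟨⟩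
      · exact absurd hadj adj_zz_xx
      · exact ⟨k, hu⟩
      · exact absurd hadj adj_zz_zz
    by_cases hja : j = a
    · subst hja
      by_cases hb : ∃ b, b ≠ j ∧ xx b ∈ D
      · obtain ⟨b, hba, hbD⟩ := hb
        have hEq := eq_of_cds_subset ⟨⟨hdom, hconn⟩, hmin⟩
          (S := {xx j, xx b, yy j}) (by
            rintro v (rfl | rfl | rfl) <;> assumption)
          (cdsA j (Ne.symm hba))
        rw [hEq] at hz; simp at hz
      · by_cases hk : ∃ k, k ≠ j ∧ yy k ∈ D
        · obtain ⟨k, hkj, hkD⟩ := hk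
          refine Or.inr ⟨j, k, Ne.symm hkj, ?_⟩
          exact eq_of_cds_subset ⟨⟨hdom, hconn⟩, hmin⟩
            (by rintro v (rfl | rfl | rfl) <;> assumption)
            (cdsB (Ne.symm hkj))
        · push_neg at hb hk
          exact absurd hconn (not_connected_of_isolated ha hz (by simp) (by
            rintro (k | k | ⟨⟩) hu hadj
            · exact hb k (Ne.symm (adj_xx_xx.mp hadj)) hu
            · exact hk k (Ne.symm (adj_xx_yy.mp hadj)) hu
            · exact adj_xx_zz hadj))
    · refine Or.inr ⟨a, j, Ne.symm hja, ?_⟩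
      exact eq_of_cds_subset ⟨⟨hdom, hconn⟩, hmin⟩
        (by rintro v (rfl | rfl | rfl) <;> assumption)
        (cdsB (Ne.symm hja))
  · -- z ∉ D; z is dominated by some y j ∈ D
    obtain ⟨j, hj⟩ : ∃ j, yy j ∈ D := by
      rcases hdom zz with h | ⟨u, hu, hadj⟩
      · exact absurd h hz
      · rcases u with k | k | ⟨⟩
        · exact absurd hadj adj_xx_zz
        · exact ⟨k, hu⟩
        · exact absurd hu hz
    by_cases hb : ∃ b, b ≠ a ∧ xx b ∈ D
    · obtain ⟨b, hba, hbD⟩ := hb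
      refine Or.inl ⟨a, b, j, Ne.symm hba, ?_⟩
      exact eq_of_cds_subset ⟨⟨hdom, hconn⟩, hmin⟩
        (by rintro v (rfl | rfl | rfl) <;> assumption)
        (cdsA j (Ne.symm hba))
    · push_neg at hb
      rcases hdom (yy a) with hya | ⟨u, hu, hadj⟩
      · exact absurd hconn (not_connected_of_isolated hya ha (by simp) (by
          rintro (k | k | ⟨⟩) hu hadj
          · exact hb k (adj_yy_xx.mp hadj) hu
          · exact adj_yy_yy hadj
          · exact absurd hu hz))
      · rcases u with k | k | ⟨⟩
        · rcases eq_or_ne k a with rfl | hka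
          · exact absurd hadj (by simp)
          · exact (hb k hka hu).elim
        · exact absurd hadj adj_yy_yy
        · exact absurd hu hz


-- counting infrastructure

attribute [local instance] Classical.decEq

noncomputable def FA (t : ℕ) : Finset (Set (Vt t)) :=
  ((Finset.univ : Finset (Fin t × Fin t × Fin t)).filter fun p => p.1 < p.2.1).image
    fun p => ({xx p.1, xx p.2.1, yy p.2.2} : Set (Vt t))

noncomputable def FB (t : ℕ) : Finset (Set (Vt t)) :=
  ((Finset.univ : Finset (Fin t × Fin t)).filter fun p => p.1 ≠ p.2).image
    fun p => ({xx p.1, yy p.2, zz} : Set (Vt t))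

lemma card_lt_pairs :
    2 * ((Finset.univ : Finset (Fin t × Fin t)).filter fun p => p.1 < p.2).card = t * t - t := by
  have hswap : ((Finset.univ : Finset (Fin t × Fin t)).filter fun p => p.1 < p.2).card
      = ((Finset.univ : Finset (Fin t × Fin t)).filter fun p => p.2 < p.1).card := by
    apply Finset.card_bij (fun p _ => (p.2, p.1))
    · intro p hp; simp at hp ⊢; exact hp
    · intro p hp q hq h
      simp only [Prod.mk.injEq] at h
      exact Prod.ext h.2 h.1
    · intro q hq
      refine ⟨(q.2, q.1), by simp at hq ⊢; exact hq, rfl⟩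
  have hdisj : Disjoint ((Finset.univ : Finset (Fin t × Fin t)).filter fun p => p.1 < p.2)
      ((Finset.univ : Finset (Fin t × Fin t)).filter fun p => p.2 < p.1) := by
    rw [Finset.disjoint_left]
    intro p hp hp'
    simp at hp hp'
    exact absurd hp' (not_lt_of_gt hp)
  have hunion : ((Finset.univ : Finset (Fin t × Fin t)).filter fun p => p.1 < p.2)
      ∪ ((Finset.univ : Finset (Fin t × Fin t)).filter fun p => p.2 < p.1)
      = (Finset.univ : Finset (Fin t × Fin t)).filter fun p => p.1 ≠ p.2 := by
    ext p
    simp only [Finset.mem_union, Finset.mem_filter, Finset.mem_univ, true_and]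
    exact ⟨fun h => h.elim ne_of_lt (fun h' => (ne_of_lt h').symm), fun h => lt_or_gt_of_ne h⟩
  have hne : ((Finset.univ : Finset (Fin t × Fin t)).filter fun p => p.1 ≠ p.2).card
      = t * t - t := by
    have : (Finset.univ : Finset (Fin t × Fin t)).filter (fun p => p.1 ≠ p.2)
        = (Finset.univ : Finset (Fin t)).offDiag := by
      ext p; simp [Finset.mem_offDiag]
    rw [this, Finset.offDiag_card, Finset.card_univ, Fintype.card_fin]
  have := Finset.card_union_of_disjoint hdisj
  rw [hunion, hne, ← hswap] at this
  omega

lemma card_lt_triples :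
    ((Finset.univ : Finset (Fin t × Fin t × Fin t)).filter fun p => p.1 < p.2.1).card
      = ((Finset.univ : Finset (Fin t × Fin t)).filter fun p => p.1 < p.2).card * t := by
  have key : ((Finset.univ : Finset (Fin t × Fin t × Fin t)).filter fun p => p.1 < p.2.1).card
      = (((Finset.univ : Finset (Fin t × Fin t)).filter fun p => p.1 < p.2)
          ×ˢ (Finset.univ : Finset (Fin t))).card := by
    apply Finset.card_bij (fun p _ => ((p.1, p.2.1), p.2.2))
    · intro p hp; simp at hp ⊢; exact hp
    · intro p hp q hq h
      simp only [Prod.mk.injEq] at h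
      obtain ⟨⟨h1, h2⟩, h3⟩ := h
      exact Prod.ext h1 (Prod.ext h2 h3)
    · rintro ⟨⟨a, b⟩, j⟩ hq
      refine ⟨(a, b, j), by simp at hq ⊢; exact hq, rfl⟩
  rw [key, Finset.card_product, Finset.card_univ, Fintype.card_fin]

lemma card_FA : (FA t).card
    = ((Finset.univ : Finset (Fin t × Fin t)).filter fun p => p.1 < p.2).card * t := by
  rw [FA, Finset.card_image_of_injOn, card_lt_triples]
  rintro ⟨a, b, j⟩ hp ⟨a', b', j'⟩ hq h
  simp only [Finset.coe_filter, Set.mem_setOf_eq, Finset.mem_univ, true_and] at hp hq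
  simp only at h
  have hj : (yy j : Vt t) ∈ ({xx a', xx b', yy j'} : Set (Vt t)) := by rw [← h]; simp
  have haa : (xx a : Vt t) ∈ ({xx a', xx b', yy j'} : Set (Vt t)) := by rw [← h]; simp
  have hbb : (xx b : Vt t) ∈ ({xx a', xx b', yy j'} : Set (Vt t)) := by rw [← h]; simp
  simp only [Set.mem_insert_iff, Set.mem_singleton_iff, Sum.inl.injEq, Sum.inr.injEq,
    reduceCtorEq, false_or, or_false] at hj haa hbb
  subst hj
  rcases haa with rfl | rfl
  · rcases hbb with rfl | rfl
    · exact absurd hp (lt_irrefl _)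
    · rfl
  · rcases hbb with rfl | rfl
    · exact absurd hq (not_lt_of_gt hp)
    · exact absurd hp (lt_irrefl _)

lemma card_FB : (FB t).card = t * t - t := by
  rw [FB, Finset.card_image_of_injOn]
  · have : (Finset.univ : Finset (Fin t × Fin t)).filter (fun p => p.1 ≠ p.2)
        = (Finset.univ : Finset (Fin t)).offDiag := by
      ext p; simp [Finset.mem_offDiag]
    rw [this, Finset.offDiag_card, Finset.card_univ, Fintype.card_fin]
  · rintro ⟨i, j⟩ hp ⟨i', j'⟩ hq h
    simp only at h
    have hi : (xx i : Vt t) ∈ ({xx i', yy j', zz} : Set (Vt t)) := by rw [← h]; simp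
    have hj : (yy j : Vt t) ∈ ({xx i', yy j', zz} : Set (Vt t)) := by rw [← h]; simp
    simp only [Set.mem_insert_iff, Set.mem_singleton_iff, Sum.inl.injEq, Sum.inr.injEq,
      reduceCtorEq, false_or, or_false] at hi hj
    exact Prod.ext hi hj

lemma FA_FB_disjoint : Disjoint (FA t) (FB t) := by
  rw [Finset.disjoint_left]
  intro D hA hB
  obtain ⟨p, -, rfl⟩ := Finset.mem_image.mp hA
  obtain ⟨q, -, hq⟩ := Finset.mem_image.mp hB
  have : (zz : Vt t) ∈ ({xx q.1, yy q.2, zz} : Set (Vt t)) := by simp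
  rw [hq] at this
  simp at this

theorem main (t : ℕ) (ht : 3 ≤ t) :
    {D : Set (Vt t) | IsMinCDS (Gt t) D ∧ ∃ i : Fin t, Sum.inl i ∈ D}.ncard
      = (t ^ 3 + t ^ 2) / 2 - t := by
  have hset : {D : Set (Vt t) | IsMinCDS (Gt t) D ∧ ∃ i : Fin t, Sum.inl i ∈ D}
      = ↑(FA t ∪ FB t) := by
    ext D
    simp only [Set.mem_setOf_eq, Finset.coe_union, Set.mem_union, Finset.mem_coe]
    constructor
    · rintro ⟨hmin, i, hi⟩
      rcases charact hmin hi with ⟨a, b, j, hab, rfl⟩ | ⟨i', j, hij, rfl⟩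
      · left
        rcases lt_or_gt_of_ne hab with hlt | hlt
        · exact Finset.mem_image.mpr ⟨(a, b, j), by simp [hlt], rfl⟩
        · refine Finset.mem_image.mpr ⟨(b, a, j), by simp [hlt], ?_⟩
          simp only
          rw [Set.insert_comm]
      · right
        exact Finset.mem_image.mpr ⟨(i', j), by simp [hij], rfl⟩
    · rintro (h | h)
      · obtain ⟨⟨a, b, j⟩, hp, rfl⟩ := Finset.mem_image.mp h
        simp only [Finset.mem_filter, Finset.mem_univ, true_and] at hp
        exact ⟨minA j (ne_of_lt hp), a, by simp⟩
      · obtain ⟨⟨i, j⟩, hp, rfl⟩ := Finset.mem_image.mp h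
        simp only [Finset.mem_filter, Finset.mem_univ, true_and] at hp
        exact ⟨minB hp, i, by simp⟩
  rw [hset, Set.ncard_coe_finset, Finset.card_union_of_disjoint FA_FB_disjoint,
    card_FA, card_FB]
  set c := ((Finset.univ : Finset (Fin t × Fin t)).filter fun p => p.1 < p.2).card with hc
  have h2c : 2 * c = t * t - t := card_lt_pairs
  have ht2 : t ≤ t * t := Nat.le_mul_of_pos_left t (by omega)
  have e1 : 2 * c + t = t * t := by omega
  have e3 : t ^ 3 + t ^ 2 = 2 * (c * t + t * t) := by
    have h3 : t ^ 3 = (2 * c + t) * t := by rw [e1]; ring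
    calc t ^ 3 + t ^ 2 = (2 * c + t) * t + t * t := by rw [h3]; ring
      _ = 2 * (c * t + t * t) := by ring
  rw [e3, Nat.mul_div_cancel_left _ (by norm_num)]
  omega

end CDSAux

theorem count_minCDS_meeting_X (t : ℕ) (ht : 3 ≤ t) :
    {D : Set (Vt t) | IsMinCDS (Gt t) D ∧ ∃ i : Fin t, Sum.inl i ∈ D}.ncard
      = (t ^ 3 + t ^ 2) / 2 - t := CDSAux.main t ht
end

section
/- For t ≥ 3, every minimal connected dominating set of G_t that intersects X has exactly three vertices. -/
open SimpleGraph

section Aux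
variable {t : ℕ}

private lemma adj_xx {i j : Fin t} (h : i ≠ j) : (Gt t).Adj (Sum.inl i) (Sum.inl j) := by
  refine ⟨by simp [h], Or.inl h⟩

private lemma adj_xy {i j : Fin t} (h : i ≠ j) :
    (Gt t).Adj (Sum.inl i) (Sum.inr (Sum.inl j)) := by
  simp [Gt, GtRel]; exact h

private lemma adj_yz (j : Fin t) :
    (Gt t).Adj (Sum.inr (Sum.inl j)) (Sum.inr (Sum.inr ())) := by
  simp [Gt, GtRel]

private lemma induce_three_connected {V : Type*} (G : SimpleGraph V) (a b c : V) (D : Set V)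
    (hD : D = {a, b, c}) (hab : G.Adj a b) (hbc : G.Adj b c) : (G.induce D).Connected := by
  subst hD
  rw [connected_iff]
  refine ⟨?_, ⟨⟨b, by simp⟩⟩⟩
  have key : ∀ w : ({a, b, c} : Set V), (G.induce {a, b, c}).Reachable w ⟨b, by simp⟩ := by
    rintro ⟨w, hw⟩
    simp only [Set.mem_insert_iff, Set.mem_singleton_iff] at hw
    rcases hw with rfl | rfl | rfl
    · exact Adj.reachable (comap_adj.mpr hab)
    · exact Reachable.refl _
    · exact Adj.reachable (comap_adj.mpr hbc.symm)
  intro u v; exact (key u).trans (key v).symm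

private lemma exists_adj_of_reachable {V : Type*} {G : SimpleGraph V} {u v : V}
    (h : G.Reachable u v) (hne : u ≠ v) : ∃ w, G.Adj u w := by
  obtain ⟨p⟩ := h
  cases p with
  | nil => exact absurd rfl hne
  | cons h _ => exact ⟨_, h⟩

private lemma walk_aux {D : Set (Vt t)} :
    ∀ {u v : D} (_ : ((Gt t).induce D).Walk u v),
    (∀ a : Fin t, u.val ≠ Sum.inl a) → (∃ a : Fin t, v.val = Sum.inl a) →
    ∃ a b : Fin t, Sum.inl a ∈ D ∧ Sum.inr (Sum.inl b) ∈ D ∧ a ≠ b := by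
  intro u v p
  induction p with
  | nil => intro hu hv; obtain ⟨a, ha⟩ := hv; exact absurd ha (hu a)
  | @cons u w v h p ih =>
    intro hu hv
    by_cases hw : ∃ a : Fin t, w.val = Sum.inl a
    · obtain ⟨a, ha⟩ := hw
      have hadj : (Gt t).Adj u.val w.val := comap_adj.mp h
      rcases hval : u.val with i | j | un
      · exact absurd hval (hu i)
      · rw [hval, ha] at hadj
        simp [Gt, GtRel] at hadj
        exact ⟨a, j, ha ▸ w.prop, hval ▸ u.prop, hadj⟩
      · rw [hval, ha] at hadj
        simp [Gt, GtRel] at hadj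
    · push_neg at hw
      exact ih hw hv

private lemma exists_xy {D : Set (Vt t)} (hc : ((Gt t).induce D).Connected)
    (hz : Sum.inr (Sum.inr ()) ∈ D) {i : Fin t} (hx : Sum.inl i ∈ D) :
    ∃ a b : Fin t, Sum.inl a ∈ D ∧ Sum.inr (Sum.inl b) ∈ D ∧ a ≠ b := by
  obtain ⟨p⟩ := hc.preconnected ⟨_, hz⟩ ⟨_, hx⟩
  exact walk_aux p (by intro a h; simp at h) ⟨i, rfl⟩

private lemma cds_xyz {a b : Fin t} (h : a ≠ b) :
    IsCDS (Gt t) {Sum.inl a, Sum.inr (Sum.inl b), Sum.inr (Sum.inr ())} := by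
  constructor
  · intro v
    rcases v with k | k | un
    · by_cases hk : k = a
      · left; subst hk; simp
      · right; exact ⟨Sum.inl a, by simp, adj_xx (Ne.symm hk)⟩
    · right; exact ⟨Sum.inr (Sum.inr ()), by simp, (adj_yz k).symm⟩
    · right; exact ⟨Sum.inr (Sum.inl b), by simp, adj_yz b⟩
  · exact induce_three_connected _ _ _ _ _ rfl (adj_xy h) (adj_yz b)

private lemma cds_xxy {a b j : Fin t} (hab : a ≠ b) :
    IsCDS (Gt t) {Sum.inl a, Sum.inl b, Sum.inr (Sum.inl j)} := by
  constructor
  · intro v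
    rcases v with k | k | un
    · by_cases hk : k = a
      · left; subst hk; simp
      · right; exact ⟨Sum.inl a, by simp, adj_xx (Ne.symm hk)⟩
    · by_cases hk : k = a
      · subst hk; right; exact ⟨Sum.inl b, by simp, adj_xy (Ne.symm hab)⟩
      · right; exact ⟨Sum.inl a, by simp, adj_xy (Ne.symm hk)⟩
    · right; exact ⟨Sum.inr (Sum.inl j), by simp, adj_yz j⟩
  · by_cases hj : j = a
    · subst hj
      exact induce_three_connected _ (Sum.inl j) (Sum.inl b) (Sum.inr (Sum.inl j)) _ rfl
        (adj_xx hab) (adj_xy (Ne.symm hab))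
    · exact induce_three_connected _ (Sum.inl b) (Sum.inl a) (Sum.inr (Sum.inl j)) _
        (by rw [Set.insert_comm]) (adj_xx (Ne.symm hab)) (adj_xy (Ne.symm hj))

private lemma exists_three_sub {D : Set (Vt t)} (hD : IsCDS (Gt t) D) {i : Fin t}
    (hxi : Sum.inl i ∈ D) :
    ∃ S : Set (Vt t), S ⊆ D ∧ IsCDS (Gt t) S ∧ S.ncard = 3 := by
  obtain ⟨hdom, hconn⟩ := hD
  by_cases hz : Sum.inr (Sum.inr ()) ∈ D
  · obtain ⟨a, b, ha, hb, hab⟩ := exists_xy hconn hz hxi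
    refine ⟨{Sum.inl a, Sum.inr (Sum.inl b), Sum.inr (Sum.inr ())}, ?_, cds_xyz hab, ?_⟩
    · intro v hv
      simp only [Set.mem_insert_iff, Set.mem_singleton_iff] at hv
      rcases hv with rfl | rfl | rfl <;> assumption
    · rw [Set.ncard_insert_of_notMem (by simp), Set.ncard_pair (by simp)]
  · obtain hzD | ⟨u, hu, hadj⟩ := hdom (Sum.inr (Sum.inr ()))
    · exact absurd hzD hz
    rcases u with a | j | un
    · simp [Gt, GtRel] at hadj
    · by_cases h2 : ∃ a, Sum.inl a ∈ D ∧ a ≠ i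
      · obtain ⟨a, ha, hai⟩ := h2
        refine ⟨{Sum.inl i, Sum.inl a, Sum.inr (Sum.inl j)}, ?_, cds_xxy (Ne.symm hai), ?_⟩
        · intro v hv
          simp only [Set.mem_insert_iff, Set.mem_singleton_iff] at hv
          rcases hv with rfl | rfl | rfl <;> assumption
        · rw [Set.ncard_insert_of_notMem (by simp [Ne.symm hai]),
            Set.ncard_pair (by simp)]
      · exfalso
        push_neg at h2
        have hyi : Sum.inr (Sum.inl i) ∈ D := by
          rcases hdom (Sum.inr (Sum.inl i)) with h | ⟨u, hu', hadj'⟩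
          · exact h
          · rcases u with a | b | un
            · have ha : a = i := h2 a hu'
              subst ha
              simp [Gt, GtRel] at hadj'
            · simp [Gt, GtRel] at hadj'
            · exact absurd hu' hz
        have hne : (⟨Sum.inr (Sum.inl i), hyi⟩ : D) ≠ ⟨Sum.inl i, hxi⟩ := by
          intro h; simp at h
        obtain ⟨w, hadjw⟩ :=
          exists_adj_of_reachable (hconn.preconnected ⟨_, hyi⟩ ⟨_, hxi⟩) hne
        have hadj' : (Gt t).Adj (Sum.inr (Sum.inl i)) w.val := comap_adj.mp hadjw
        rcases hval : w.val with a | b | un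
        · rw [hval] at hadj'
          simp [Gt, GtRel] at hadj'
          exact hadj' (h2 a (hval ▸ w.prop))
        · rw [hval] at hadj'
          simp [Gt, GtRel] at hadj'
        · exact hz (hval ▸ w.prop)
    · exact absurd hu hz

end Aux

theorem minCDS_meeting_X_has_three_vertices (t : ℕ) (ht : 3 ≤ t) (D : Set (Vt t))
    (hD : IsMinCDS (Gt t) D) (hX : ∃ i : Fin t, Sum.inl i ∈ D) :
    D.ncard = 3 := by
  obtain ⟨hcds, hmin⟩ := hD
  obtain ⟨i, hxi⟩ := hX
  obtain ⟨S, hsub, hScds, hS3⟩ := exists_three_sub hcds hxi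
  rcases hsub.ssubset_or_eq with hss | heq
  · exact absurd hScds (hmin S hss)
  · rw [← heq]; exact hS3
end

section
/- The function f(t) = ((t³ + t²)/2 − t)^{1/(2t+1)} over positive integers t attains its maximum at t = 4, with f(4) = 36^{1/9}. -/
open SimpleGraph

lemma key_ge4 : ∀ t : ℕ, 4 ≤ t →
    (((t : ℝ) ^ 3 + (t : ℝ) ^ 2) / 2 - t) ^ 9 ≤ 36 ^ (2 * t + 1) := by
  intro t ht
  induction t, ht using Nat.le_induction with
  | base => norm_num
  | succ n hn ih =>
    have hn4 : (4 : ℝ) ≤ (n : ℝ) := by exact_mod_cast hn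
    have hx : (0:ℝ) ≤ ((n:ℝ)^3+(n:ℝ)^2)/2 - n := by nlinarith
    have hnn : (0:ℝ) ≤ (((n:ℝ)+1)^3+((n:ℝ)+1)^2)/2 - ((n:ℝ)+1) := by nlinarith
    have h2 : (((n:ℝ)+1)^3+((n:ℝ)+1)^2)/2 - ((n:ℝ)+1)
        ≤ 2*(((n:ℝ)^3+(n:ℝ)^2)/2 - (n:ℝ)) := by nlinarith
    have hp : (0:ℝ) < 36 ^ (2 * n + 1) := by positivity
    have e1 : ((((n+1:ℕ):ℝ))^3+(((n+1:ℕ):ℝ))^2)/2 - ((n+1:ℕ):ℝ)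
        = (((n:ℝ)+1)^3+((n:ℝ)+1)^2)/2 - ((n:ℝ)+1) := by push_cast; ring
    rw [e1]
    calc ((((n:ℝ)+1)^3+((n:ℝ)+1)^2)/2 - ((n:ℝ)+1)) ^ 9
        ≤ (2*(((n:ℝ)^3+(n:ℝ)^2)/2 - (n:ℝ))) ^ 9 := pow_le_pow_left₀ hnn h2 9
      _ = 512 * (((n:ℝ)^3+(n:ℝ)^2)/2 - (n:ℝ)) ^ 9 := by ring
      _ ≤ 512 * 36 ^ (2*n+1) := by linarith
      _ ≤ 36 ^ (2*(n+1)+1) := by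
          have h : (36:ℝ)^(2*(n+1)+1) = 1296 * 36^(2*n+1) := by
            rw [show 2*(n+1)+1 = 2+(2*n+1) by ring, pow_add]; norm_num
          rw [h]; linarith

lemma key_all : ∀ t : ℕ, 1 ≤ t →
    (((t : ℝ) ^ 3 + (t : ℝ) ^ 2) / 2 - t) ^ 9 ≤ 36 ^ (2 * t + 1) := by
  intro t ht
  rcases le_or_gt 4 t with h | h
  · exact key_ge4 t h
  · interval_cases t <;> norm_num

theorem f_max_at_four :
    (∀ t : ℕ, 1 ≤ t →
      (((t : ℝ) ^ 3 + (t : ℝ) ^ 2) / 2 - t) ^ ((1 : ℝ) / (2 * (t : ℝ) + 1))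
        ≤ (36 : ℝ) ^ ((1 : ℝ) / 9)) ∧
    (((4 : ℝ) ^ 3 + (4 : ℝ) ^ 2) / 2 - 4) ^ ((1 : ℝ) / (2 * (4 : ℝ) + 1))
      = (36 : ℝ) ^ ((1 : ℝ) / 9) := by
  constructor
  · intro t ht
    have ht1 : (1 : ℝ) ≤ (t : ℝ) := by exact_mod_cast ht
    set a : ℝ := ((t : ℝ) ^ 3 + (t : ℝ) ^ 2) / 2 - t with ha_def
    have ha : 0 ≤ a := by rw [ha_def]; nlinarith
    have hkey : a ^ 9 ≤ 36 ^ (2 * t + 1) := key_all t ht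
    have h36 : (0:ℝ) ≤ 36 := by norm_num
    have hd : (2*(t:ℝ)+1) ≠ 0 := by positivity
    have e1 : (1:ℝ)/(2*(t:ℝ)+1) = 9 * (9*(2*(t:ℝ)+1))⁻¹ := by field_simp
    have e2 : (1:ℝ)/9 = (2*(t:ℝ)+1) * (9*(2*(t:ℝ)+1))⁻¹ := by field_simp
    rw [e1, e2, Real.rpow_mul ha, Real.rpow_mul h36]
    apply Real.rpow_le_rpow (by positivity) _ (by positivity)
    have e3 : a ^ (9:ℝ) = a ^ (9:ℕ) := by
      rw [← Real.rpow_natCast a 9]; norm_num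
    have e4 : (36:ℝ) ^ (2*(t:ℝ)+1) = (36:ℝ) ^ (2*t+1 : ℕ) := by
      rw [← Real.rpow_natCast (36:ℝ) (2*t+1)]; congr 1; push_cast; ring
    rw [e3, e4]
    exact hkey
  · norm_num
end

section
/- For t ≥ 3 and k ≥ 2, a set D containing s is a minimal connected dominating set of G_t^k if and only if for each copy i of G_t, the intersection of D with that copy is a minimal connected dominating set of G_t intersecting its X-set (where domination of X-vertices by s is taken into account and edges within X may be ignored). -/
open SimpleGraph

section Aux

variable {t k : ℕ}

lemma gtk'_adj {u v : Vtk t k} :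
    (Gtk' t k).Adj u v ↔ u ≠ v ∧ (GtkRel t k (GtRel' t) u v ∨ GtkRel t k (GtRel' t) v u) := by
  rw [Gtk', SimpleGraph.fromRel_adj]

lemma gt_adj {u v : Vt t} :
    (Gt t).Adj u v ↔ u ≠ v ∧ (GtRel t u v ∨ GtRel t v u) := by
  rw [Gt, SimpleGraph.fromRel_adj]

lemma gtrel'_le {u v : Vt t} (h : GtRel' t u v) : GtRel t u v := by
  rcases u with a | b | u <;> rcases v with a' | b' | u' <;> simp_all [GtRel, GtRel']

lemma gtrel_cases {u v : Vt t} (h : GtRel t u v) :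
    (∃ a b : Fin t, u = Sum.inl a ∧ v = Sum.inl b) ∨ GtRel' t u v := by
  rcases u with a | b | u <;> rcases v with a' | b' | u' <;> simp_all [GtRel, GtRel']

/-- hub adjacent to X vertices -/
lemma s_adj_x {i : Fin k} {a : Fin t} :
    (Gtk' t k).Adj (Sum.inr ()) (Sum.inl (i, Sum.inl a)) := by
  rw [gtk'_adj]
  exact ⟨by simp, Or.inl trivial⟩

lemma adj_same_copy {i j : Fin k} {u v : Vt t}
    (h : (Gtk' t k).Adj (Sum.inl (i, u)) (Sum.inl (j, v))) : j = i ∧ (Gt t).Adj u v := by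
  rw [gtk'_adj] at h
  obtain ⟨hne, h | h⟩ := h <;> simp only [GtkRel] at h
  · exact ⟨h.1.symm, gt_adj.2 ⟨by simpa using fun h' => hne (by rw [h.1, h']),
      Or.inl (gtrel'_le h.2)⟩⟩
  · exact ⟨h.1, gt_adj.2 ⟨by simpa using fun h' => hne (by rw [← h.1, h']),
      Or.inr (gtrel'_le h.2)⟩⟩

lemma adj_copy_s {i : Fin k} {u : Vt t} {x : Unit}
    (h : (Gtk' t k).Adj (Sum.inl (i, u)) (Sum.inr x)) : ∃ a : Fin t, u = Sum.inl a := by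
  rw [gtk'_adj] at h
  obtain ⟨-, h | h⟩ := h <;> rcases u with a | b | u' <;> simp_all [GtkRel]

/-- hub not adjacent to non-X vertices -/
lemma not_adj_s_copy {i : Fin k} {c : Fin t ⊕ Unit} {x : Unit} :
    ¬ (Gtk' t k).Adj (Sum.inr x) (Sum.inl (i, Sum.inr c)) := by
  intro h
  obtain ⟨a, ha⟩ := adj_copy_s h.symm
  exact (by simp : (Sum.inr c : Vt t) ≠ Sum.inl a) ha

lemma gt_adj_to_gtk' {i : Fin k} {u v : Vt t} (h : (Gt t).Adj u v) :
    (∃ a b : Fin t, u = Sum.inl a ∧ v = Sum.inl b) ∨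
      (Gtk' t k).Adj (Sum.inl (i, u)) (Sum.inl (i, v)) := by
  rw [gt_adj] at h
  obtain ⟨hne, h | h⟩ := h
  · rcases gtrel_cases h with ⟨a, b, rfl, rfl⟩ | h'
    · exact Or.inl ⟨a, b, rfl, rfl⟩
    · exact Or.inr (gtk'_adj.2 ⟨by simpa using hne, Or.inl (by simp only [GtkRel]; exact ⟨trivial, h'⟩)⟩)
  · rcases gtrel_cases h with ⟨a, b, rfl, rfl⟩ | h'
    · exact Or.inl ⟨b, a, rfl, rfl⟩
    · exact Or.inr (gtk'_adj.2 ⟨by simpa using hne, Or.inr (by simp only [GtkRel]; exact ⟨trivial, h'⟩)⟩)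

end Aux
section Walks

variable {t k : ℕ} {D : Set (Vtk t k)}

lemma reach_s_aux {i : Fin k} :
    ∀ {v w : ↥D} (_ : ((Gtk' t k).induce D).Walk v w) (u : Vt t),
      (v : Vtk t k) = Sum.inl (i, u) → (w : Vtk t k) = Sum.inr () →
      ∃ a : Fin t, Sum.inl (i, Sum.inl a) ∈ D := by
  intro v w p
  induction p with
  | nil =>
    intro u hv hw
    rw [hw] at hv
    exact absurd hv (by simp)
  | @cons v v₂ w h p ih =>
    intro u hv hw
    have h' : (Gtk' t k).Adj (v : Vtk t k) (v₂ : Vtk t k) := h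
    rw [hv] at h'
    obtain ⟨x, hxD⟩ := v₂
    rcases x with ⟨j, u₂⟩ | un
    · obtain ⟨rfl, -⟩ := adj_same_copy h'
      exact ih u₂ rfl hw
    · obtain ⟨a, rfl⟩ := adj_copy_s h'
      exact ⟨a, hv ▸ v.2⟩

lemma stay (hsD : Sum.inr () ∉ D) {j : Fin k} :
    ∀ {v w : ↥D} (_ : ((Gtk' t k).induce D).Walk v w) (u : Vt t),
      (v : Vtk t k) = Sum.inl (j, u) → ∃ u', (w : Vtk t k) = Sum.inl (j, u') := by
  intro v w p
  induction p with
  | nil => intro u hv; exact ⟨u, hv⟩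
  | @cons v v₂ w h p ih =>
    intro u hv
    have h' : (Gtk' t k).Adj (v : Vtk t k) (v₂ : Vtk t k) := h
    rw [hv] at h'
    obtain ⟨x, hxD⟩ := v₂
    rcases x with ⟨j', u₂⟩ | un
    · obtain ⟨rfl, -⟩ := adj_same_copy h'
      exact ih u₂ rfl
    · cases un
      exact absurd hxD hsD

lemma proj {i : Fin k} {u' : Vt t} (hu' : Sum.inl (i, u') ∈ D) :
    ∀ {v w : ↥D} (_ : ((Gtk' t k).induce D).Walk v w),
      (w : Vtk t k) = Sum.inl (i, u') →
      (∀ u (hu : Sum.inl (i, u) ∈ D), (v : Vtk t k) = Sum.inl (i, u) →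
        ((Gt t).induce {x : Vt t | Sum.inl (i, x) ∈ D}).Reachable ⟨u, hu⟩ ⟨u', hu'⟩) ∧
      ((∀ u : Vt t, (v : Vtk t k) ≠ Sum.inl (i, u)) →
        ∀ a (ha : Sum.inl (i, Sum.inl a) ∈ D),
          ((Gt t).induce {x : Vt t | Sum.inl (i, x) ∈ D}).Reachable ⟨Sum.inl a, ha⟩ ⟨u', hu'⟩) := by
  intro v w p
  induction p with
  | nil =>
    intro hw
    constructor
    · intro u hu hv
      have : u = u' := by rw [hv] at hw; simpa using hw
      subst this
      exact SimpleGraph.Reachable.refl _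
    · intro hv
      exact absurd hw (hv u')
  | @cons v v₂ w h p ih =>
    intro hw
    have ih' := ih hw
    have h' : (Gtk' t k).Adj (v : Vtk t k) (v₂ : Vtk t k) := h
    constructor
    · intro u hu hv
      rw [hv] at h'
      obtain ⟨x, hxD⟩ := v₂
      rcases x with ⟨j, u₂⟩ | un
      · obtain ⟨hji, hA⟩ := adj_same_copy h'
        have hu₂ : Sum.inl (i, u₂) ∈ D := hji ▸ hxD
        have e : ((Gt t).induce {x : Vt t | Sum.inl (i, x) ∈ D}).Adj ⟨u, hu⟩ ⟨u₂, hu₂⟩ := hA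
        exact e.reachable.trans (ih'.1 u₂ hu₂ (by simp [hji]))
      · cases un
        obtain ⟨a, rfl⟩ := adj_copy_s h'
        exact ih'.2 (fun u => by simp) a hu
    · intro hv a ha
      obtain ⟨x, hxD⟩ := v₂
      rcases x with ⟨j, u₂⟩ | un
      · by_cases hj : j = i
        · subst hj
          obtain ⟨y, hyD⟩ := v
          rcases y with ⟨j', u₃⟩ | un'
          · obtain ⟨rfl, -⟩ := adj_same_copy h'
            exact absurd rfl (hv u₃)
          · cases un'
            obtain ⟨b, rfl⟩ := adj_copy_s h'.symm
            have hb : Sum.inl (j, Sum.inl b) ∈ D := hxD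
            have hr := ih'.1 (Sum.inl b) hb rfl
            by_cases hab : a = b
            · subst hab; exact hr
            · have e : ((Gt t).induce {x : Vt t | Sum.inl (j, x) ∈ D}).Adj
                  ⟨Sum.inl a, ha⟩ ⟨Sum.inl b, hb⟩ :=
                gt_adj.2 ⟨by simpa using hab, Or.inl (by simp only [GtRel]; exact hab)⟩
              exact e.reachable.trans hr
        · exact ih'.2 (fun u => by simp [hj]) a ha
      · cases un
        exact ih'.2 (fun u => by simp) a ha

lemma lift (hsD : Sum.inr () ∈ D) {i : Fin k} :
    ∀ {x y : ↥{u : Vt t | Sum.inl (i, u) ∈ D}}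
      (_ : ((Gt t).induce {u : Vt t | Sum.inl (i, u) ∈ D}).Walk x y),
      ((Gtk' t k).induce D).Reachable ⟨Sum.inl (i, (x : Vt t)), x.2⟩
        ⟨Sum.inl (i, (y : Vt t)), y.2⟩ := by
  intro x y p
  induction p with
  | nil => exact SimpleGraph.Reachable.refl _
  | @cons x x₂ y h p ih =>
    have h' : (Gt t).Adj (x : Vt t) (x₂ : Vt t) := h
    rcases gt_adj_to_gtk' (i := i) (k := k) h' with ⟨a, b, ha, hb⟩ | hadj
    · have e1 : (Gtk' t k).Adj (Sum.inl (i, (x : Vt t))) (Sum.inr ()) := by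
        rw [ha]; exact s_adj_x.symm
      have e2 : (Gtk' t k).Adj (Sum.inr ()) (Sum.inl (i, (x₂ : Vt t))) := by
        rw [hb]; exact s_adj_x
      refine SimpleGraph.Reachable.trans ?_ ih
      exact SimpleGraph.Reachable.trans
        ((show ((Gtk' t k).induce D).Adj ⟨Sum.inl (i, (x : Vt t)), x.2⟩
            ⟨Sum.inr (), hsD⟩ from e1).reachable)
        ((show ((Gtk' t k).induce D).Adj ⟨Sum.inr (), hsD⟩
            ⟨Sum.inl (i, (x₂ : Vt t)), x₂.2⟩ from e2).reachable)
    · exact SimpleGraph.Reachable.trans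
        ((show ((Gtk' t k).induce D).Adj ⟨Sum.inl (i, (x : Vt t)), x.2⟩
            ⟨Sum.inl (i, (x₂ : Vt t)), x₂.2⟩ from hadj).reachable) ih

end Walks
section CdsIff

variable {t k : ℕ}

lemma cds_iff (D : Set (Vtk t k)) (hs : Sum.inr () ∈ D) :
    IsCDS (Gtk' t k) D ↔
      ∀ i : Fin k, IsCDS (Gt t) {u : Vt t | Sum.inl (i, u) ∈ D} ∧
        ∃ a : Fin t, Sum.inl (i, Sum.inl a) ∈ D := by
  constructor
  · rintro ⟨hdom, hconn⟩ i
    have hw : ∃ w : Vt t, Sum.inl (i, w) ∈ D := by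
      rcases hdom (Sum.inl (i, Sum.inr (Sum.inr ()))) with h | ⟨u, hu, hadj⟩
      · exact ⟨_, h⟩
      · rcases u with ⟨j, u₀⟩ | x
        · exact ⟨u₀, ((adj_same_copy hadj).1).symm ▸ hu⟩
        · cases x; exact absurd hadj not_adj_s_copy
    obtain ⟨w, hwD⟩ := hw
    have hX : ∃ a, Sum.inl (i, Sum.inl a) ∈ D := by
      obtain ⟨p⟩ := hconn.preconnected ⟨Sum.inl (i, w), hwD⟩ ⟨Sum.inr (), hs⟩
      exact reach_s_aux p w rfl rfl
    obtain ⟨a, ha⟩ := hX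
    refine ⟨⟨?_, ?_⟩, a, ha⟩
    · intro v
      rcases v with e | c
      · by_cases hea : e = a
        · exact Or.inl (by show Sum.inl (i, Sum.inl e) ∈ D; rw [hea]; exact ha)
        · refine Or.inr ⟨Sum.inl a, ha, ?_⟩
          exact gt_adj.2 ⟨by simp; exact fun h => hea h.symm,
            Or.inl (by simp only [GtRel]; exact fun h => hea h.symm)⟩
      · rcases hdom (Sum.inl (i, Sum.inr c)) with h | ⟨u, hu, hadj⟩
        · exact Or.inl h
        · rcases u with ⟨j, u₀⟩ | x
          · obtain ⟨hij, hA⟩ := adj_same_copy hadj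
            exact Or.inr ⟨u₀, hij.symm ▸ hu, hA⟩
          · cases x; exact absurd hadj not_adj_s_copy
    · rw [SimpleGraph.connected_iff]
      refine ⟨?_, ⟨⟨Sum.inl a, ha⟩⟩⟩
      rintro ⟨p, hp⟩ ⟨q, hq⟩
      obtain ⟨pk⟩ := hconn.preconnected ⟨Sum.inl (i, p), hp⟩ ⟨Sum.inl (i, q), hq⟩
      exact (proj hq pk rfl).1 p hp rfl
  · intro h
    constructor
    · intro v
      rcases v with ⟨i, u⟩ | x
      · rcases u with a | c
        · exact Or.inr ⟨Sum.inr (), hs, s_adj_x⟩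
        · rcases (h i).1.1 (Sum.inr c) with hm | ⟨u₀, hu₀, hA⟩
          · exact Or.inl hm
          · refine Or.inr ⟨Sum.inl (i, u₀), hu₀, ?_⟩
            rcases gt_adj_to_gtk' (i := i) (k := k) hA with ⟨a, b, -, hb⟩ | hadj
            · exact absurd hb (by simp)
            · exact hadj
      · cases x; exact Or.inl hs
    · rw [SimpleGraph.connected_iff]
      refine ⟨?_, ⟨⟨Sum.inr (), hs⟩⟩⟩
      have key : ∀ v : ↥D, ((Gtk' t k).induce D).Reachable v ⟨Sum.inr (), hs⟩ := by
        rintro ⟨x, hx⟩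
        rcases x with ⟨i, u⟩ | x
        · obtain ⟨⟨-, hconn⟩, a, ha⟩ := h i
          have hu : u ∈ {u : Vt t | Sum.inl (i, u) ∈ D} := hx
          obtain ⟨pk⟩ := hconn.preconnected ⟨u, hu⟩ ⟨Sum.inl a, ha⟩
          refine (lift hs pk).trans ?_
          exact (show ((Gtk' t k).induce D).Adj ⟨Sum.inl (i, Sum.inl a), ha⟩
            ⟨Sum.inr (), hs⟩ from s_adj_x.symm).reachable
        · cases x; exact SimpleGraph.Reachable.refl _
      exact fun v w => (key v).trans (key w).symm

end CdsIff
section K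

variable {t : ℕ}

lemma x_adj_x {a e : Fin t} (h : a ≠ e) : (Gt t).Adj (Sum.inl a) (Sum.inl e) :=
  gt_adj.2 ⟨by simp [h], Or.inl (by simp only [GtRel]; exact h)⟩

lemma x_adj_y {a c : Fin t} (h : a ≠ c) :
    (Gt t).Adj (Sum.inl a) (Sum.inr (Sum.inl c)) :=
  gt_adj.2 ⟨by simp, Or.inl (by simp only [GtRel]; exact h)⟩

lemma y_adj_z {c : Fin t} :
    (Gt t).Adj (Sum.inr (Sum.inl c)) (Sum.inr (Sum.inr ())) :=
  gt_adj.2 ⟨by simp, Or.inl (by simp only [GtRel])⟩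

lemma adj_x_cases {a : Fin t} {u : Vt t} (hu : (Gt t).Adj u (Sum.inl a)) :
    (∃ b, u = Sum.inl b ∧ b ≠ a) ∨ (∃ c, u = Sum.inr (Sum.inl c) ∧ c ≠ a) := by
  rcases u with b | c | x
  · exact Or.inl ⟨b, rfl, fun h => hu.ne (by rw [h])⟩
  · refine Or.inr ⟨c, rfl, ?_⟩
    rw [gt_adj] at hu
    rcases hu.2 with h | h
    · simp only [GtRel] at h
    · simp only [GtRel] at h; exact fun hh => h hh.symm
  · rw [gt_adj] at hu
    rcases hu.2 with h | h <;> simp only [GtRel] at h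

lemma no_y_y_adj {e f : Fin t} (h : (Gt t).Adj (Sum.inr (Sum.inl e)) (Sum.inr (Sum.inl f))) :
    False := by
  rw [gt_adj] at h
  rcases h.2 with h' | h' <;> simp only [GtRel] at h'

lemma lemK {S T : Set (Vt t)} (hT : T ⊂ S) (hTc : IsCDS (Gt t) T)
    {a : Fin t} (haS : Sum.inl a ∈ S) :
    ∃ T', T' ⊂ S ∧ IsCDS (Gt t) T' ∧ ∃ b, Sum.inl b ∈ T' := by
  by_cases hX : ∃ b : Fin t, Sum.inl b ∈ T
  · exact ⟨T, hT, hTc, hX⟩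
  push_neg at hX
  obtain ⟨hdom, hconn⟩ := hTc
  have hya : ∃ c, c ≠ a ∧ Sum.inr (Sum.inl c) ∈ T := by
    rcases hdom (Sum.inl a) with h | ⟨u, hu, hadj⟩
    · exact absurd h (hX a)
    · rcases adj_x_cases hadj with ⟨b, rfl, -⟩ | ⟨c, rfl, hca⟩
      · exact absurd hu (hX b)
      · exact ⟨c, hca, hu⟩
  obtain ⟨c, hca, hcT⟩ := hya
  -- z ∈ T
  have hzT : Sum.inr (Sum.inr ()) ∈ T := by
    by_contra hz
    have hyd : ∃ d, d ≠ c ∧ Sum.inr (Sum.inl d) ∈ T := by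
      rcases hdom (Sum.inl c) with h | ⟨u, hu, hadj⟩
      · exact absurd h (hX c)
      · rcases adj_x_cases hadj with ⟨b, rfl, -⟩ | ⟨d, rfl, hdc⟩
        · exact absurd hu (hX b)
        · exact ⟨d, hdc, hu⟩
    obtain ⟨d, hdc, hdT⟩ := hyd
    have hbot : (Gt t).induce T = ⊥ := by
      ext u v
      simp only [SimpleGraph.bot_adj, iff_false]
      intro hadj
      have hadj' : (Gt t).Adj (u : Vt t) (v : Vt t) := hadj
      obtain ⟨xu, hxu⟩ := u
      obtain ⟨xv, hxv⟩ := v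
      rcases xu with b | e | x
      · exact hX b hxu
      · rcases xv with b' | f | x'
        · exact hX b' hxv
        · exact no_y_y_adj hadj'
        · cases x'; exact hz hxv
      · cases x; exact hz hxu
    have := hconn.preconnected ⟨_, hcT⟩ ⟨_, hdT⟩
    rw [hbot, SimpleGraph.reachable_bot] at this
    exact hdc (by simpa using this.symm)
  -- choose b (to remove) and c' (to keep)
  have hbc : ∃ b c', Sum.inr (Sum.inl b) ∈ T ∧ Sum.inr (Sum.inl c') ∈ T ∧
      c' ≠ a ∧ c' ≠ b := by
    by_cases hyaT : Sum.inr (Sum.inl a) ∈ T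
    · exact ⟨a, c, hyaT, hcT, hca, hca⟩
    · have h2 : ∃ d, d ≠ c ∧ Sum.inr (Sum.inl d) ∈ T := by
        rcases hdom (Sum.inl c) with h | ⟨u, hu, hadj⟩
        · exact absurd h (hX c)
        · rcases adj_x_cases hadj with ⟨b, rfl, -⟩ | ⟨d, rfl, hdc⟩
          · exact absurd hu (hX b)
          · exact ⟨d, hdc, hu⟩
      obtain ⟨d, hdc, hdT⟩ := h2
      exact ⟨d, c, hdT, hcT, hca, fun h => hdc h.symm⟩
  obtain ⟨b, c', hbT, hc'T, hc'a, hc'b⟩ := hbc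
  refine ⟨insert (Sum.inl a) T \ {Sum.inr (Sum.inl b)}, ?_, ⟨?_, ?_⟩, a, ?_⟩
  · rw [Set.ssubset_def]
    constructor
    · rintro v ⟨hv1, -⟩
      rcases hv1 with rfl | hv
      · exact haS
      · exact hT.1 hv
    · intro hcon
      exact (hcon (hT.1 hbT)).2 rfl
  · -- dominating
    intro v
    rcases v with e | f | x
    · by_cases hea : e = a
      · subst hea; exact Or.inl ⟨Or.inl rfl, by simp⟩
      · exact Or.inr ⟨Sum.inl a, ⟨Or.inl rfl, by simp⟩, x_adj_x fun h => hea h.symm⟩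
    · exact Or.inr ⟨Sum.inr (Sum.inr ()), ⟨Or.inr hzT, by simp⟩, y_adj_z.symm⟩
    · cases x; exact Or.inl ⟨Or.inr hzT, by simp⟩
  · -- connected
    have hzT' : (Sum.inr (Sum.inr ()) : Vt t) ∈ insert (Sum.inl a) T \ {Sum.inr (Sum.inl b)} :=
      ⟨Or.inr hzT, by simp⟩
    have hc'T' : (Sum.inr (Sum.inl c') : Vt t) ∈ insert (Sum.inl a) T \ {Sum.inr (Sum.inl b)} :=
      ⟨Or.inr hc'T, by simp [hc'b]⟩
    rw [SimpleGraph.connected_iff]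
    refine ⟨?_, ⟨⟨_, hzT'⟩⟩⟩
    have key : ∀ v : ↥(insert (Sum.inl a) T \ {Sum.inr (Sum.inl b)}),
        ((Gt t).induce _).Reachable v ⟨_, hzT'⟩ := by
      rintro ⟨x, hx⟩
      rcases x with e | f | x
      · have hea : e = a := by
          rcases hx.1 with h | h
          · simpa using h
          · exact absurd h (hX e)
        subst hea
        have e1 : ((Gt t).induce (insert (Sum.inl e) T \ {Sum.inr (Sum.inl b)})).Adj
            ⟨Sum.inl e, hx⟩ ⟨Sum.inr (Sum.inl c'), hc'T'⟩ := x_adj_y fun h => hc'a h.symm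
        have e2 : ((Gt t).induce (insert (Sum.inl e) T \ {Sum.inr (Sum.inl b)})).Adj
            ⟨Sum.inr (Sum.inl c'), hc'T'⟩ ⟨_, hzT'⟩ := y_adj_z
        exact e1.reachable.trans e2.reachable
      · exact (show ((Gt t).induce _).Adj ⟨Sum.inr (Sum.inl f), hx⟩ ⟨_, hzT'⟩ from
          y_adj_z).reachable
      · cases x; exact SimpleGraph.Reachable.refl _
    exact fun v w => (key v).trans (key w).symm
  · exact ⟨Or.inl rfl, by simp⟩

end K
section Main

variable {t k : ℕ}

def modifyTrace (D : Set (Vtk t k)) (i : Fin k) (T : Set (Vt t)) : Set (Vtk t k) :=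
  fun v => match v with
  | Sum.inl (j, u) => if j = i then u ∈ T else Sum.inl (j, u) ∈ D
  | Sum.inr _ => True

lemma modify_s (D : Set (Vtk t k)) (i : Fin k) (T : Set (Vt t)) {x : Unit} :
    Sum.inr x ∈ modifyTrace D i T := trivial

lemma modify_mem_eq (D : Set (Vtk t k)) (i : Fin k) (T : Set (Vt t)) (u : Vt t) :
    Sum.inl (i, u) ∈ modifyTrace D i T ↔ u ∈ T := by
  show (if i = i then u ∈ T else _) ↔ _
  simp

lemma modify_mem_ne (D : Set (Vtk t k)) {i j : Fin k} (T : Set (Vt t)) (u : Vt t)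
    (hj : j ≠ i) : Sum.inl (j, u) ∈ modifyTrace D i T ↔ Sum.inl (j, u) ∈ D := by
  show (if j = i then u ∈ T else _) ↔ _
  simp [hj]

lemma modify_trace_eq (D : Set (Vtk t k)) (i : Fin k) (T : Set (Vt t)) :
    {u : Vt t | Sum.inl (i, u) ∈ modifyTrace D i T} = T := by
  ext u; exact modify_mem_eq D i T u

lemma modify_trace_ne (D : Set (Vtk t k)) {i j : Fin k} (T : Set (Vt t)) (hj : j ≠ i) :
    {u : Vt t | Sum.inl (j, u) ∈ modifyTrace D i T} = {u : Vt t | Sum.inl (j, u) ∈ D} := by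
  ext u; exact modify_mem_ne D T u hj

lemma modify_ssubset (D : Set (Vtk t k)) (hs : Sum.inr () ∈ D) (i : Fin k) {T : Set (Vt t)}
    (hT : T ⊂ {u : Vt t | Sum.inl (i, u) ∈ D}) : modifyTrace D i T ⊂ D := by
  rw [Set.ssubset_def]
  constructor
  · intro v hv
    rcases v with ⟨j, u⟩ | x
    · by_cases hj : j = i
      · subst hj
        exact hT.1 ((modify_mem_eq D j T u).1 hv)
      · exact (modify_mem_ne D T u hj).1 hv
    · cases x; exact hs
  · obtain ⟨w, hwD, hwT⟩ := Set.exists_of_ssubset hT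
    intro hcon
    exact hwT ((modify_mem_eq D i T w).1 (hcon hwD))

end Main
theorem minCDS_iff_traces (t k : ℕ) (ht : 3 ≤ t) (hk : 2 ≤ k)
    (D : Set (Vtk t k)) (hs : Sum.inr () ∈ D) :
    IsMinCDS (Gtk' t k) D ↔
      ∀ i : Fin k,
        IsMinCDS (Gt t) {u : Vt t | Sum.inl (i, u) ∈ D} ∧
        ∃ a : Fin t, Sum.inl (i, Sum.inl a) ∈ D := by
  constructor
  · rintro ⟨hCDS, hmin⟩
    have hL := (cds_iff D hs).1 hCDS
    intro i
    refine ⟨⟨(hL i).1, ?_⟩, (hL i).2⟩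
    intro T hT hTc
    obtain ⟨a, ha⟩ := (hL i).2
    obtain ⟨T', hT'S, hT'c, b, hb⟩ := lemK hT hTc (a := a) ha
    refine hmin (modifyTrace D i T') (modify_ssubset D hs i hT'S) ?_
    refine (cds_iff _ (modify_s D i T')).2 ?_
    intro j
    by_cases hj : j = i
    · subst hj
      rw [modify_trace_eq]
      exact ⟨hT'c, b, (modify_mem_eq D j T' (Sum.inl b)).2 hb⟩
    · rw [modify_trace_ne D T' hj]
      refine ⟨(hL j).1, ?_⟩
      obtain ⟨a', ha'⟩ := (hL j).2
      exact ⟨a', (modify_mem_ne D T' (Sum.inl a') hj).2 ha'⟩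
  · intro h
    have hL : IsCDS (Gtk' t k) D := (cds_iff D hs).2 fun i => ⟨(h i).1.1, (h i).2⟩
    refine ⟨hL, ?_⟩
    intro D' hsub hD'c
    have hs' : Sum.inr () ∈ D' := by
      by_contra hs'
      obtain ⟨hdom', hconn'⟩ := hD'c
      have hw : ∀ j : Fin k, ∃ w, Sum.inl (j, w) ∈ D' := by
        intro j
        rcases hdom' (Sum.inl (j, Sum.inr (Sum.inr ()))) with h' | ⟨u, hu, hadj⟩
        · exact ⟨_, h'⟩
        · rcases u with ⟨j', u₀⟩ | x
          · exact ⟨u₀, ((adj_same_copy hadj).1).symm ▸ hu⟩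
          · cases x; exact absurd hadj not_adj_s_copy
      obtain ⟨w0, hw0⟩ := hw ⟨0, by omega⟩
      obtain ⟨w1, hw1⟩ := hw ⟨1, by omega⟩
      obtain ⟨p⟩ := hconn'.preconnected ⟨_, hw0⟩ ⟨_, hw1⟩
      obtain ⟨u', hu'⟩ := stay hs' p w0 rfl
      simp at hu'
    have hL' := (cds_iff D' hs').1 hD'c
    obtain ⟨v, hvD, hvD'⟩ := Set.exists_of_ssubset hsub
    rcases v with ⟨i, u⟩ | x
    · have hsubT : {u : Vt t | Sum.inl (i, u) ∈ D'} ⊂ {u : Vt t | Sum.inl (i, u) ∈ D} := by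
        rw [Set.ssubset_def]
        exact ⟨fun u' hu' => hsub.1 hu', fun hcon => hvD' (hcon hvD)⟩
      exact (h i).1.2 _ hsubT (hL' i).1
    · cases x; exact hvD' hs'
end

section
/- For every k ≥ 1 and t ≥ 1, the graph G_t^k with the edges inside each X-set removed is t-degenerate. -/
open SimpleGraph

theorem Gtk'_degenerate (t k : ℕ) (hk : 1 ≤ k) (ht : 1 ≤ t) :
    ∀ S : Set (Vtk t k), S.Nonempty →
      ∃ v ∈ S, {u ∈ S | (Gtk' t k).Adj v u}.ncard ≤ t := by
  intro S hS
  by_cases h : ∃ v ∈ S, v ≠ Sum.inr ()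
  · obtain ⟨v, hv, hne⟩ := h
    refine ⟨v, hv, ?_⟩
    obtain ⟨c, u⟩ | u := v
    swap
    · exact absurd rfl hne
    have key : ∃ f : Fin t → Vtk t k,
        {u' ∈ S | (Gtk' t k).Adj (Sum.inl (c, u)) u'} ⊆ Set.range f := by
      match u with
      | Sum.inl i =>
        refine ⟨fun j => if j = i then Sum.inr () else Sum.inl (c, Sum.inr (Sum.inl j)), ?_⟩
        rintro w ⟨-, hadj⟩
        rw [Gtk', fromRel_adj] at hadj
        obtain ⟨hne', hrel⟩ := hadj
        rcases w with ⟨c', (j | j | _)⟩ | u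
        · exfalso; rcases hrel with h1 | h1 <;> exact h1.2
        · have hcj : c' = c ∧ j ≠ i := by
            rcases hrel with h1 | h1
            · exact ⟨h1.1.symm, fun e => h1.2 e.symm⟩
            · exact absurd h1.2 (by simp [GtRel'])
          exact ⟨j, by simp [hcj.1, hcj.2]⟩
        · exfalso; rcases hrel with h1 | h1 <;> exact h1.2
        · exact ⟨i, by simp⟩
      | Sum.inr (Sum.inl j) =>
        refine ⟨fun i => if i = j then Sum.inl (c, Sum.inr (Sum.inr ())) else Sum.inl (c, Sum.inl i), ?_⟩
        rintro w ⟨-, hadj⟩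
        rw [Gtk', fromRel_adj] at hadj
        obtain ⟨hne', hrel⟩ := hadj
        rcases w with ⟨c', (i | i | _)⟩ | u
        · have hci : c' = c ∧ i ≠ j := by
            rcases hrel with h1 | h1
            · exact absurd h1.2 (by simp [GtRel'])
            · exact ⟨h1.1, h1.2⟩
          exact ⟨i, by simp [hci.1, hci.2]⟩
        · exfalso; rcases hrel with h1 | h1 <;> exact h1.2
        · have hc : c' = c := by
            rcases hrel with h1 | h1
            · exact h1.1.symm
            · exact h1.1
          exact ⟨j, by simp [hc]⟩
        · exact absurd hrel (by simp [GtkRel])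
      | Sum.inr (Sum.inr _) =>
        refine ⟨fun j => Sum.inl (c, Sum.inr (Sum.inl j)), ?_⟩
        rintro w ⟨-, hadj⟩
        rw [Gtk', fromRel_adj] at hadj
        obtain ⟨hne', hrel⟩ := hadj
        rcases w with ⟨c', (i | i | _)⟩ | u
        · exfalso; rcases hrel with h1 | h1 <;> exact (by simpa [GtRel'] using h1.2)
        · have hc : c' = c := by
            rcases hrel with h1 | h1
            · exact h1.1.symm
            · exact h1.1
          exact ⟨i, by simp [hc]⟩
        · exfalso; rcases hrel with h1 | h1
          · exact h1.2
          · exact h1.2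
        · exact absurd hrel (by simp [GtkRel])
    obtain ⟨f, hf⟩ := key
    calc {u' ∈ S | (Gtk' t k).Adj (Sum.inl (c, u)) u'}.ncard
        ≤ (Set.range f).ncard := Set.ncard_le_ncard hf (Set.finite_range f)
      _ ≤ t := by
          rw [← Set.image_univ]
          refine le_trans (Set.ncard_image_le Set.finite_univ) ?_
          simp [Set.ncard_univ]
  · obtain ⟨v, hv⟩ := hS
    refine ⟨v, hv, ?_⟩
    push_neg at h
    have hv' : v = Sum.inr () := h v hv
    have : {u ∈ S | (Gtk' t k).Adj v u} = ∅ := by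
      ext u
      simp only [Set.mem_setOf_eq, Set.mem_empty_iff_false, iff_false, not_and]
      intro hu hadj
      have := h u hu
      rw [hv', this] at hadj
      exact hadj.ne rfl
    rw [this]
    simp
end

section
/- For every k ≥ 1, the graph G_3^k (with edges inside each X-set removed) is planar. -/
open SimpleGraph

/-- `G` has an `H`-minor: disjoint nonempty connected branch sets realizing
every edge of `H`. -/
def HasMinor {α β : Type*} (G : SimpleGraph α) (H : SimpleGraph β) : Prop :=
  ∃ f : β → Set α, (∀ b, (f b).Nonempty) ∧ (∀ b, (G.induce (f b)).Connected) ∧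
    (Pairwise fun b b' => Disjoint (f b) (f b')) ∧
    ∀ b b', H.Adj b b' → ∃ a ∈ f b, ∃ a' ∈ f b', G.Adj a a'

/-- Planarity via Wagner's theorem: no `K₅` minor and no `K₃,₃` minor. -/
def Planar {α : Type*} (G : SimpleGraph α) : Prop :=
  ¬ HasMinor G (completeGraph (Fin 5)) ∧
  ¬ HasMinor G (completeBipartiteGraph (Fin 3) (Fin 3))

abbrev V8 := Vt 3 ⊕ Unit

/-- adjacency bitmask for the 8-vertex graph `Q3`: vertices `0,1,2 = X`,
`3,4,5 = Y`, `6 = z`, `7 = s`. -/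
def mask : Nat → Nat
  | 0 => 176 | 1 => 168 | 2 => 152 | 3 => 70 | 4 => 69 | 5 => 67 | 6 => 56 | _ => 7

def adjB (i j : Nat) : Bool := (mask i >>> j) % 2 == 1

def allN (n : Nat) (p : Nat → Bool) : Bool :=
  match n with | 0 => true | n+1 => p n && allN n p

def impB (a b : Bool) : Bool := !a || b

theorem allN_spec {p : Nat → Bool} {n : Nat} (h : allN n p = true) :
    ∀ i, i < n → p i = true := by
  induction n with
  | zero => intro i hi; omega
  | succ n ih =>
    rw [allN, Bool.and_eq_true] at h
    intro i hi
    rcases Nat.lt_succ_iff_lt_or_eq.mp hi with h' | rfl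
    · exact ih h.2 i h'
    · exact h.1

theorem impB_spec {a b : Bool} (h : impB a b = true) (ha : a = true) : b = true := by
  rw [impB, ha] at h; simpa using h

/-- no `K_{2,3}` subgraph -/
def check23 : Bool := allN 8 fun u => allN 8 fun w1 => impB (adjB u w1) <|
  allN 8 fun v => impB (!(u == v) && adjB v w1) <|
  allN 8 fun w2 => impB (!(w1 == w2) && adjB u w2 && adjB v w2) <|
  allN 8 fun w3 => impB (!(w1 == w3) && !(w2 == w3)) <| !(adjB u w3 && adjB v w3)

theorem check23_true : check23 = true := by decide

/-- no vertex has 4 distinct neighbors -/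
def checkDeg : Bool := allN 8 fun v => allN 8 fun a => impB (adjB v a) <|
  allN 8 fun b => impB (!(a == b) && adjB v b) <|
  allN 8 fun c => impB (!(a == c) && !(b == c) && adjB v c) <|
  allN 8 fun d => impB (!(a == d) && !(b == d) && !(c == d)) <| !(adjB v d)

theorem checkDeg_true : checkDeg = true := by decide

/-- no two disjoint edges among the non-neighbors of a vertex -/
def checkB1 : Bool := allN 8 fun p1 => allN 8 fun p2 => impB (adjB p1 p2) <|
  allN 8 fun q1 => impB (!(q1 == p1) && !(q1 == p2)) <|
  allN 8 fun q2 => impB (!(q2 == p1) && !(q2 == p2) && !(q2 == q1) && adjB q1 q2) <|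
  allN 8 fun u => !(!(u == p1) && !(u == p2) && !(u == q1) && !(u == q2) &&
    !(adjB u p1) && !(adjB u p2) && !(adjB u q1) && !(adjB u q2))

theorem checkB1_true : checkB1 = true := by decide

/-- the `B2` configuration fact -/
def checkB2 : Bool := allN 8 fun a => allN 8 fun c => impB (adjB a c) <|
  allN 8 fun d => impB (!(c == d) && adjB a d) <|
  allN 8 fun b => impB (!(a == b) && adjB b c && adjB b d) <|
  allN 8 fun x => impB (adjB x a && !(x == b) && !(x == c) && !(x == d)) <|
  allN 8 fun y => impB (adjB y b && !(y == a) && !(y == c) && !(y == d)) <|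
    (!(x == y) && !(adjB x y))

theorem checkB2_true : checkB2 = true := by decide

/-- encoding of the abstract vertex type into `Nat` -/
def enc : V8 → Nat
  | .inl (.inl i) => i.val
  | .inl (.inr (.inl j)) => 3 + j.val
  | .inl (.inr (.inr _)) => 6
  | .inr _ => 7

theorem enc_lt (a : V8) : enc a < 8 := by revert a; decide

theorem enc_inj {a b : V8} (h : enc a = enc b) : a = b := by revert a b h; decide

/-- The 8-vertex graph: one copy of `G_3` (without `X`-edges) plus the hub. -/
def Hg : SimpleGraph V8 where
  Adj a b := adjB (enc a) (enc b) = true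
  symm := by
    have : ∀ a b : V8, adjB (enc a) (enc b) = adjB (enc b) (enc a) := by decide
    constructor; intro a b h; rw [this] at h; exact h
  loopless := by constructor; intro a; revert a; decide

theorem Hg_adj {a b : V8} : Hg.Adj a b ↔ adjB (enc a) (enc b) = true := Iff.rfl

instance : DecidableRel Hg.Adj := fun a b => decidable_of_iff _ Hg_adj.symm

theorem bne_of_ne {a b : V8} (h : a ≠ b) : (enc a == enc b) = false :=
  beq_eq_false_iff_ne.mpr fun e => h (enc_inj e)

theorem adj_t {a b : V8} (h : Hg.Adj a b) : adjB (enc a) (enc b) = true := h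

theorem nadj_f {a b : V8} (h : ¬ Hg.Adj a b) : adjB (enc a) (enc b) = false := by
  cases hb : adjB (enc a) (enc b)
  · rfl
  · exact absurd hb h

/-- There is no `K_{2,3}`-subgraph in `Hg`. -/
theorem Hg_noK23 {u v w1 w2 w3 : V8} (huv : u ≠ v)
    (h12 : w1 ≠ w2) (h13 : w1 ≠ w3) (h23 : w2 ≠ w3)
    (a1 : Hg.Adj u w1) (a2 : Hg.Adj u w2) (a3 : Hg.Adj u w3)
    (b1 : Hg.Adj v w1) (b2 : Hg.Adj v w2) (b3 : Hg.Adj v w3) : False := by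
  have h := allN_spec check23_true (enc u) (enc_lt u)
  have h := allN_spec h (enc w1) (enc_lt w1)
  have h := impB_spec h (adj_t a1)
  have h := allN_spec h (enc v) (enc_lt v)
  have h := impB_spec h (by rw [bne_of_ne huv, adj_t b1]; rfl)
  have h := allN_spec h (enc w2) (enc_lt w2)
  have h := impB_spec h (by rw [bne_of_ne h12, adj_t a2, adj_t b2]; rfl)
  have h := allN_spec h (enc w3) (enc_lt w3)
  have h := impB_spec h (by rw [bne_of_ne h13, bne_of_ne h23]; rfl)
  rw [adj_t a3, adj_t b3] at h
  simp at h

/-- No vertex of `Hg` has four distinct neighbors. -/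
theorem Hg_deg {v a b c d : V8}
    (hab : a ≠ b) (hac : a ≠ c) (had : a ≠ d) (hbc : b ≠ c) (hbd : b ≠ d) (hcd : c ≠ d)
    (h1 : Hg.Adj v a) (h2 : Hg.Adj v b) (h3 : Hg.Adj v c) (h4 : Hg.Adj v d) : False := by
  have h := allN_spec checkDeg_true (enc v) (enc_lt v)
  have h := allN_spec h (enc a) (enc_lt a)
  have h := impB_spec h (adj_t h1)
  have h := allN_spec h (enc b) (enc_lt b)
  have h := impB_spec h (by rw [bne_of_ne hab, adj_t h2]; rfl)
  have h := allN_spec h (enc c) (enc_lt c)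
  have h := impB_spec h (by rw [bne_of_ne hac, bne_of_ne hbc, adj_t h3]; rfl)
  have h := allN_spec h (enc d) (enc_lt d)
  have h := impB_spec h (by rw [bne_of_ne had, bne_of_ne hbd, bne_of_ne hcd]; rfl)
  rw [adj_t h4] at h
  simp at h

/-- No two disjoint edges among the non-neighbors of a vertex of `Hg`. -/
theorem Hg_B1 {u p1 p2 q1 q2 : V8}
    (hp : Hg.Adj p1 p2) (hq : Hg.Adj q1 q2)
    (h11 : q1 ≠ p1) (h12 : q1 ≠ p2) (h21 : q2 ≠ p1) (h22 : q2 ≠ p2) (hqq : q2 ≠ q1)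
    (hu1 : u ≠ p1) (hu2 : u ≠ p2) (hu3 : u ≠ q1) (hu4 : u ≠ q2)
    (n1 : ¬ Hg.Adj u p1) (n2 : ¬ Hg.Adj u p2) (n3 : ¬ Hg.Adj u q1) (n4 : ¬ Hg.Adj u q2) :
    False := by
  have h := allN_spec checkB1_true (enc p1) (enc_lt p1)
  have h := allN_spec h (enc p2) (enc_lt p2)
  have h := impB_spec h (adj_t hp)
  have h := allN_spec h (enc q1) (enc_lt q1)
  have h := impB_spec h (by rw [bne_of_ne h11, bne_of_ne h12]; rfl)
  have h := allN_spec h (enc q2) (enc_lt q2)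
  have h := impB_spec h (by rw [bne_of_ne h21, bne_of_ne h22, bne_of_ne hqq, adj_t hq]; rfl)
  have h := allN_spec h (enc u) (enc_lt u)
  rw [bne_of_ne hu1, bne_of_ne hu2, bne_of_ne hu3, bne_of_ne hu4,
    nadj_f n1, nadj_f n2, nadj_f n3, nadj_f n4] at h
  simp at h

/-- The `B2` configuration fact for `Hg`. -/
theorem Hg_B2 {a b c d x y : V8}
    (hac : Hg.Adj a c) (hcd : c ≠ d) (had : Hg.Adj a d) (hab : a ≠ b)
    (hbc : Hg.Adj b c) (hbd : Hg.Adj b d)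
    (hxa : Hg.Adj x a) (hxb : x ≠ b) (hxc : x ≠ c) (hxd : x ≠ d)
    (hyb : Hg.Adj y b) (hya : y ≠ a) (hyc : y ≠ c) (hyd : y ≠ d) :
    x ≠ y ∧ ¬ Hg.Adj x y := by
  have h := allN_spec checkB2_true (enc a) (enc_lt a)
  have h := allN_spec h (enc c) (enc_lt c)
  have h := impB_spec h (adj_t hac)
  have h := allN_spec h (enc d) (enc_lt d)
  have h := impB_spec h (by rw [bne_of_ne hcd, adj_t had]; rfl)
  have h := allN_spec h (enc b) (enc_lt b)
  have h := impB_spec h (by rw [bne_of_ne hab, adj_t hbc, adj_t hbd]; rfl)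
  have h := allN_spec h (enc x) (enc_lt x)
  have h := impB_spec h
    (by rw [adj_t hxa, bne_of_ne hxb, bne_of_ne hxc, bne_of_ne hxd]; rfl)
  have h := allN_spec h (enc y) (enc_lt y)
  have h := impB_spec h
    (by rw [adj_t hyb, bne_of_ne hya, bne_of_ne hyc, bne_of_ne hyd]; rfl)
  rw [Bool.and_eq_true] at h
  constructor
  · intro e; rw [e] at h; simp at h
  · intro hAdj; rw [adj_t hAdj] at h; simp at h
/-! ### Structure of `Gtk' 3 k` -/

/-- embedding of the model graph as "copy `c` plus hub". -/
def phi (k : ℕ) (c : Fin k) : V8 → Vtk 3 k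
  | .inl u => .inl (c, u)
  | .inr _ => .inr ()

/-- the inverse of `phi` -/
def psi (k : ℕ) : Vtk 3 k → V8
  | .inl (_, u) => .inl u
  | .inr _ => .inr ()

/-- the vertex set of copy `c`. -/
def cpy (k : ℕ) (c : Fin k) : Set (Vtk 3 k) := {x | ∃ u : Vt 3, x = Sum.inl (c, u)}

theorem psi_phi {k : ℕ} {c : Fin k} (a : V8) : psi k (phi k c a) = a := by
  rcases a with u | u
  · rfl
  · rfl

theorem phi_inj {k : ℕ} {c : Fin k} : Function.Injective (phi k c) := by
  intro a b h
  rw [← psi_phi (c := c) a, ← psi_phi (c := c) b, h]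

theorem phi_psi {k : ℕ} {c : Fin k} {x : Vtk 3 k}
    (hx : x = Sum.inr () ∨ x ∈ cpy k c) : phi k c (psi k x) = x := by
  rcases hx with rfl | ⟨u, rfl⟩
  · rfl
  · rfl

/-- Bool version of the base relation of the model graph. -/
def hrelB : V8 → V8 → Bool
  | .inl (.inl i), .inl (.inr (.inl j)) => i != j
  | .inl (.inr (.inl _)), .inl (.inr (.inr _)) => true
  | .inl (.inl _), .inr _ => true
  | .inr _, .inl (.inl _) => true
  | _, _ => false

theorem gtkRel_phi {k : ℕ} (c : Fin k) (a b : V8) :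
    GtkRel 3 k (GtRel' 3) (phi k c a) (phi k c b) ↔ hrelB a b = true := by
  rcases a with (i | j | z) | s <;> rcases b with (i' | j' | z') | s' <;>
    simp [phi, GtkRel, GtRel', hrelB]

theorem adj_phi {k : ℕ} (c : Fin k) (a b : V8) :
    (Gtk' 3 k).Adj (phi k c a) (phi k c b) ↔ Hg.Adj a b := by
  rw [Gtk', SimpleGraph.fromRel_adj, gtkRel_phi, gtkRel_phi, phi_inj.ne_iff]
  revert a b
  decide

theorem adj_copy {k : ℕ} {c c' : Fin k} {u u' : Vt 3}
    (h : (Gtk' 3 k).Adj (Sum.inl (c, u)) (Sum.inl (c', u'))) : c = c' := by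
  rw [Gtk', SimpleGraph.fromRel_adj] at h
  rcases h with ⟨-, h | h⟩
  · simp only [GtkRel] at h
    exact h.1
  · simp only [GtkRel] at h
    exact h.1.symm

theorem adj_step {k : ℕ} {c : Fin k} {u : Vt 3} {x : Vtk 3 k}
    (h : (Gtk' 3 k).Adj (Sum.inl (c, u)) x) :
    x = Sum.inr () ∨ ∃ u', x = Sum.inl (c, u') := by
  rcases x with ⟨c', u'⟩ | t
  · exact Or.inr ⟨u', by rw [adj_copy h]⟩
  · exact Or.inl rfl

theorem induce_adj' {α : Type*} {G : SimpleGraph α} {S : Set α} {x y : ↥S} :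
    (G.induce S).Adj x y ↔ G.Adj ↑x ↑y := by
  simp

/-- a connected set avoiding the hub lies inside one copy -/
theorem walk_copy {k : ℕ} {c : Fin k} {S : Set (Vtk 3 k)} (hs : Sum.inr () ∉ S)
    {a b : ↥S} (p : ((Gtk' 3 k).induce S).Walk a b) :
    ↑b ∈ cpy k c → ↑a ∈ cpy k c := by
  induction p with
  | nil => exact id
  | @cons a x b h p ih =>
    intro hb
    obtain ⟨u', hxu⟩ := ih hb
    have hG : (Gtk' 3 k).Adj ↑a ↑x := induce_adj'.mp h
    obtain ⟨(⟨c2, u2⟩ | t), haS⟩ := a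
    · rw [hxu] at hG
      obtain rfl : c2 = c := adj_copy hG
      exact ⟨u2, rfl⟩
    · exact absurd haS hs

theorem walk_to_s {k : ℕ} {c : Fin k} {S : Set (Vtk 3 k)}
    {a b : ↥S} (p : ((Gtk' 3 k).induce S).Walk a b) :
    ∀ (_ : ↑b = (Sum.inr () : Vtk 3 k)) (ha : ↑a ∈ cpy k c),
    ((Gtk' 3 k).induce (insert (Sum.inr ()) (S ∩ cpy k c))).Reachable
      ⟨↑a, Set.mem_insert_iff.mpr (Or.inr ⟨a.2, ha⟩)⟩
      ⟨Sum.inr (), Set.mem_insert _ _⟩ := by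
  induction p with
  | nil =>
    intro hb ha
    obtain ⟨u, e⟩ := ha
    rw [hb] at e
    simp at e
  | @cons a x b h p ih =>
    intro hb ha
    obtain ⟨u, hau⟩ := ha
    have hG : (Gtk' 3 k).Adj ↑a ↑x := induce_adj'.mp h
    rw [hau] at hG
    rcases adj_step hG with hxs | ⟨u', hxu⟩
    · have hadj : ((Gtk' 3 k).induce (insert (Sum.inr ()) (S ∩ cpy k c))).Adj
          ⟨↑a, Set.mem_insert_iff.mpr (Or.inr ⟨a.2, ⟨u, hau⟩⟩)⟩
          ⟨Sum.inr (), Set.mem_insert _ _⟩ := by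
        rw [induce_adj']
        rw [hau, ← hxs]
        exact hG
      exact hadj.reachable
    · have hxc : ↑x ∈ cpy k c := ⟨u', hxu⟩
      have hadj : ((Gtk' 3 k).induce (insert (Sum.inr ()) (S ∩ cpy k c))).Adj
          ⟨↑a, Set.mem_insert_iff.mpr (Or.inr ⟨a.2, ⟨u, hau⟩⟩)⟩
          ⟨↑x, Set.mem_insert_iff.mpr (Or.inr ⟨x.2, hxc⟩)⟩ := by
        rw [induce_adj', hau]
        exact hG
      exact hadj.reachable.trans (ih hb hxc)

/-- localizing a connected set containing the hub to one copy plus the hub -/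
theorem connected_s_part {k : ℕ} {c : Fin k} {S : Set (Vtk 3 k)}
    (hconn : ((Gtk' 3 k).induce S).Connected) (hsS : Sum.inr () ∈ S) :
    ((Gtk' 3 k).induce (insert (Sum.inr ()) (S ∩ cpy k c))).Connected := by
  rw [SimpleGraph.connected_iff]
  refine ⟨?_, ⟨⟨Sum.inr (), Set.mem_insert _ _⟩⟩⟩
  have key : ∀ w : ↥(insert (Sum.inr ()) (S ∩ cpy k c)),
      ((Gtk' 3 k).induce (insert (Sum.inr ()) (S ∩ cpy k c))).Reachable w
        ⟨Sum.inr (), Set.mem_insert _ _⟩ := by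
    rintro ⟨x, hx⟩
    rcases Set.mem_insert_iff.mp hx with rfl | ⟨hxS, hxc⟩
    · rfl
    · obtain ⟨p⟩ := hconn.preconnected ⟨x, hxS⟩ ⟨Sum.inr (), hsS⟩
      exact walk_to_s p rfl hxc
  intro u v
  exact (key u).trans (key v).symm

/-- pulling back a localized connected set through `phi` -/
theorem connected_pull {k : ℕ} {c : Fin k} {A : Set (Vtk 3 k)}
    (hA : ∀ x ∈ A, x = Sum.inr () ∨ x ∈ cpy k c)
    (h : ((Gtk' 3 k).induce A).Connected) : (Hg.induce (phi k c ⁻¹' A)).Connected := by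
  have e : Hg.induce (phi k c ⁻¹' A) ≃g (Gtk' 3 k).induce A := by
    refine ⟨⟨fun x => ⟨phi k c x.1, x.2⟩,
      fun y => ⟨psi k y.1, show phi k c (psi k y.1) ∈ A by
        rw [phi_psi (hA y.1 y.2)]; exact y.2⟩, ?_, ?_⟩, ?_⟩
    · intro x; exact Subtype.ext (psi_phi x.1)
    · intro y; exact Subtype.ext (phi_psi (hA y.1 y.2))
    · intro x y
      exact (induce_adj'.trans (adj_phi c x.1 y.1)).trans induce_adj'.symm
  exact e.connected_iff.mpr h

/-- a connected two-element set gives an edge -/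
theorem adj_of_connected_pair {α : Type*} {G : SimpleGraph α} {a b : α} (hab : a ≠ b)
    (h : (G.induce {a, b}).Connected) : G.Adj a b := by
  have ha : a ∈ ({a, b} : Set α) := by simp
  have hb : b ∈ ({a, b} : Set α) := by simp
  obtain ⟨w⟩ := h.preconnected ⟨a, ha⟩ ⟨b, hb⟩
  have key : ∀ (x y : ↥({a, b} : Set α)) (_ : (G.induce {a, b}).Walk x y),
      ↑x = a → ↑y = b → G.Adj a b := by
    intro x y w hx hy
    cases w with
    | nil => exact absurd (hx.symm.trans hy) hab
    | @cons _ z _ hadj p =>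
      have hG : G.Adj ↑x ↑z := induce_adj'.mp hadj
      rcases z.2 with hz | hz
      · rw [hx, hz] at hG
        exact absurd rfl hG.ne
      · rw [hx, hz] at hG
        exact hG
  exact key _ _ w rfl rfl

/-! ### Counting helpers -/

theorem disj_ne {α : Type*} {β : Type*} {f : β → Set α}
    (hdisj : Pairwise fun b b' => Disjoint (f b) (f b')) {b b' : β} (h : b ≠ b')
    {x y : α} (hx : x ∈ f b) (hy : y ∈ f b') : x ≠ y := by
  intro e
  exact Set.disjoint_left.mp (hdisj h) hx (e ▸ hy)

theorem sum_card_le {β : Type*} [Fintype β] [DecidableEq β] {f : β → Set V8}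
    (hdisj : Pairwise fun b b' => Disjoint (f b) (f b')) :
    ∑ b, ((Set.toFinite (f b)).toFinset).card ≤ 8 := by
  have hd : ∀ b ∈ Finset.univ, ∀ b' ∈ Finset.univ, b ≠ b' →
      Disjoint ((Set.toFinite (f b)).toFinset) ((Set.toFinite (f b')).toFinset) := by
    intro b _ b' _ hbb'
    rw [Set.Finite.disjoint_toFinset]
    exact hdisj hbb'
  calc ∑ b, ((Set.toFinite (f b)).toFinset).card
      = (Finset.univ.biUnion fun b => (Set.toFinite (f b)).toFinset).card :=
        (Finset.card_biUnion hd).symm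
    _ ≤ (Finset.univ : Finset V8).card := Finset.card_le_card (Finset.subset_univ _)
    _ = 8 := by rw [Finset.card_univ]; rfl

theorem card_pos_of_nonempty {s : Set V8} (h : s.Nonempty) :
    1 ≤ ((Set.toFinite s).toFinset).card := by
  obtain ⟨x, hx⟩ := h
  exact Finset.card_pos.mpr ⟨x, (Set.Finite.mem_toFinset _).mpr hx⟩

theorem set_eq_singleton {s : Set V8} (h : ((Set.toFinite s).toFinset).card = 1) :
    ∃ v, s = {v} := by
  obtain ⟨v, hv⟩ := Finset.card_eq_one.mp h
  refine ⟨v, Set.ext fun a => ?_⟩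
  rw [← Set.Finite.mem_toFinset (Set.toFinite s), hv]
  simp

theorem set_eq_pair {s : Set V8} (h : ((Set.toFinite s).toFinset).card = 2) :
    ∃ p q, p ≠ q ∧ s = {p, q} := by
  obtain ⟨p, q, hpq, hv⟩ := Finset.card_eq_two.mp h
  refine ⟨p, q, hpq, Set.ext fun a => ?_⟩
  rw [← Set.Finite.mem_toFinset (Set.toFinite s), hv]
  simp

theorem mem_of_eq_singleton {f : Set V8} {v : V8} (h : f = {v}) : v ∈ f := by
  rw [h]; rfl

/-! ### No `K₅` minor in `Hg` -/

theorem noK5 : ¬ HasMinor Hg (completeGraph (Fin 5)) := by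
  rintro ⟨f, hne, hconn, hdisj, hedge⟩
  have hcard : ∀ b, 2 ≤ ((Set.toFinite (f b)).toFinset).card := by
    intro b
    by_contra hlt
    push_neg at hlt
    have h1 := card_pos_of_nonempty (hne b)
    have hcb : ((Set.toFinite (f b)).toFinset).card = 1 := by omega
    obtain ⟨v, hv⟩ := set_eq_singleton hcb
    have hnb : ∀ m : Fin 5, m ≠ 0 → ∃ n, n ∈ f (b + m) ∧ Hg.Adj v n := by
      intro m hm
      have hbm : b ≠ b + m := by
        intro e
        exact hm (left_eq_add.mp e)
      obtain ⟨a, ha, a', ha', hadj⟩ := hedge b (b + m) hbm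
      rw [hv, Set.mem_singleton_iff] at ha
      exact ⟨a', ha', ha ▸ hadj⟩
    obtain ⟨n1, hn1, ha1⟩ := hnb 1 (by decide)
    obtain ⟨n2, hn2, ha2⟩ := hnb 2 (by decide)
    obtain ⟨n3, hn3, ha3⟩ := hnb 3 (by decide)
    obtain ⟨n4, hn4, ha4⟩ := hnb 4 (by decide)
    have hd : ∀ (m m' : Fin 5), m ≠ m' → ∀ {x y : V8},
        x ∈ f (b + m) → y ∈ f (b + m') → x ≠ y := by
      intro m m' hmm x y hx hy
      exact disj_ne hdisj (fun e => hmm (add_left_cancel e)) hx hy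
    exact Hg_deg (hd 1 2 (by decide) hn1 hn2) (hd 1 3 (by decide) hn1 hn3)
      (hd 1 4 (by decide) hn1 hn4) (hd 2 3 (by decide) hn2 hn3)
      (hd 2 4 (by decide) hn2 hn4) (hd 3 4 (by decide) hn3 hn4) ha1 ha2 ha3 ha4
  have hsum := sum_card_le hdisj
  have h10 : (10 : ℕ) ≤ ∑ b : Fin 5, ((Set.toFinite (f b)).toFinset).card := by
    calc (10 : ℕ) = ∑ _b : Fin 5, 2 := by simp
      _ ≤ _ := Finset.sum_le_sum fun b _ => hcard b
  omega

/-! ### No `K₃,₃` minor in `Hg` -/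

theorem K33adj (i j : Fin 3) :
    (completeBipartiteGraph (Fin 3) (Fin 3)).Adj (Sum.inl i) (Sum.inr j) := by simp

/-- adjacency between two singleton branch sets -/
theorem ss_adj {f : Fin 3 ⊕ Fin 3 → Set V8}
    (hedge : ∀ b b', (completeBipartiteGraph (Fin 3) (Fin 3)).Adj b b' →
      ∃ a ∈ f b, ∃ a' ∈ f b', Hg.Adj a a')
    {b b' : Fin 3 ⊕ Fin 3} {x y : V8} (hb : f b = {x}) (hb' : f b' = {y})
    (hK : (completeBipartiteGraph (Fin 3) (Fin 3)).Adj b b') : Hg.Adj x y := by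
  obtain ⟨a, ha, a', ha', hadj⟩ := hedge b b' hK
  rw [hb, Set.mem_singleton_iff] at ha
  rw [hb', Set.mem_singleton_iff] at ha'
  rw [← ha, ← ha']
  exact hadj

/-- case: at most one non-singleton branch set, on the `U` side. -/
theorem K33_oneU {f : Fin 3 ⊕ Fin 3 → Set V8}
    (hdisj : Pairwise fun b b' => Disjoint (f b) (f b'))
    (hedge : ∀ b b', (completeBipartiteGraph (Fin 3) (Fin 3)).Adj b b' →
      ∃ a ∈ f b, ∃ a' ∈ f b', Hg.Adj a a')
    (i0 : Fin 3) (hsing : ∀ b, b ≠ Sum.inl i0 → ∃ v, f b = {v}) : False := by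
  obtain ⟨i1, i2, h10, h20, h12⟩ :=
    (by decide : ∀ i0 : Fin 3, ∃ i1 i2, i1 ≠ i0 ∧ i2 ≠ i0 ∧ i1 ≠ i2) i0
  obtain ⟨u1, hu1⟩ := hsing (Sum.inl i1) (by simpa using h10)
  obtain ⟨u2, hu2⟩ := hsing (Sum.inl i2) (by simpa using h20)
  have hws : ∀ j : Fin 3, ∃ v, f (Sum.inr j) = {v} := fun j => hsing _ (by simp)
  choose w hw using hws
  have hwd : ∀ j j' : Fin 3, j ≠ j' → w j ≠ w j' := fun j j' hjj =>
    disj_ne hdisj (by simpa using hjj) (mem_of_eq_singleton (hw j))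
      (mem_of_eq_singleton (hw j'))
  exact Hg_noK23
    (disj_ne hdisj (by simpa using h12) (mem_of_eq_singleton hu1) (mem_of_eq_singleton hu2))
    (hwd 0 1 (by decide)) (hwd 0 2 (by decide)) (hwd 1 2 (by decide))
    (ss_adj hedge hu1 (hw 0) (K33adj _ _)) (ss_adj hedge hu1 (hw 1) (K33adj _ _))
    (ss_adj hedge hu1 (hw 2) (K33adj _ _)) (ss_adj hedge hu2 (hw 0) (K33adj _ _))
    (ss_adj hedge hu2 (hw 1) (K33adj _ _)) (ss_adj hedge hu2 (hw 2) (K33adj _ _))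

/-- case: at most one non-singleton branch set, on the `W` side. -/
theorem K33_oneW {f : Fin 3 ⊕ Fin 3 → Set V8}
    (hdisj : Pairwise fun b b' => Disjoint (f b) (f b'))
    (hedge : ∀ b b', (completeBipartiteGraph (Fin 3) (Fin 3)).Adj b b' →
      ∃ a ∈ f b, ∃ a' ∈ f b', Hg.Adj a a')
    (j0 : Fin 3) (hsing : ∀ b, b ≠ Sum.inr j0 → ∃ v, f b = {v}) : False := by
  obtain ⟨j1, j2, h10, h20, h12⟩ :=
    (by decide : ∀ j0 : Fin 3, ∃ j1 j2, j1 ≠ j0 ∧ j2 ≠ j0 ∧ j1 ≠ j2) j0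
  obtain ⟨w1, hw1⟩ := hsing (Sum.inr j1) (by simpa using h10)
  obtain ⟨w2, hw2⟩ := hsing (Sum.inr j2) (by simpa using h20)
  have hus : ∀ i : Fin 3, ∃ v, f (Sum.inl i) = {v} := fun i => hsing _ (by simp)
  choose u hu using hus
  have hud : ∀ i i' : Fin 3, i ≠ i' → u i ≠ u i' := fun i i' hii =>
    disj_ne hdisj (by simpa using hii) (mem_of_eq_singleton (hu i))
      (mem_of_eq_singleton (hu i'))
  exact Hg_noK23
    (disj_ne hdisj (by simpa using h12) (mem_of_eq_singleton hw1) (mem_of_eq_singleton hw2))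
    (hud 0 1 (by decide)) (hud 0 2 (by decide)) (hud 1 2 (by decide))
    ((ss_adj hedge (hu 0) hw1 (K33adj _ _)).symm) ((ss_adj hedge (hu 1) hw1 (K33adj _ _)).symm)
    ((ss_adj hedge (hu 2) hw1 (K33adj _ _)).symm) ((ss_adj hedge (hu 0) hw2 (K33adj _ _)).symm)
    ((ss_adj hedge (hu 1) hw2 (K33adj _ _)).symm) ((ss_adj hedge (hu 2) hw2 (K33adj _ _)).symm)

/-- case: exactly two non-singleton branch sets, both on the `U` side. -/
theorem K33_sameU {f : Fin 3 ⊕ Fin 3 → Set V8}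
    (hconn : ∀ b, (Hg.induce (f b)).Connected)
    (hdisj : Pairwise fun b b' => Disjoint (f b) (f b'))
    (hedge : ∀ b b', (completeBipartiteGraph (Fin 3) (Fin 3)).Adj b b' →
      ∃ a ∈ f b, ∃ a' ∈ f b', Hg.Adj a a')
    (i1 i2 : Fin 3) (h12 : i1 ≠ i2)
    (hsing : ∀ b, b ≠ Sum.inl i1 → b ≠ Sum.inl i2 → ∃ v, f b = {v})
    (hP : ∃ p q, p ≠ q ∧ f (Sum.inl i1) = {p, q})
    (hQ : ∃ p q, p ≠ q ∧ f (Sum.inl i2) = {p, q}) : False := by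
  obtain ⟨i3, h31, h32⟩ :=
    (by decide : ∀ i1 i2 : Fin 3, i1 ≠ i2 → ∃ i3, i3 ≠ i1 ∧ i3 ≠ i2) i1 i2 h12
  obtain ⟨uu, hu⟩ := hsing (Sum.inl i3) (by simpa using h31) (by simpa using h32)
  have hws : ∀ j : Fin 3, ∃ v, f (Sum.inr j) = {v} := fun j => hsing _ (by simp) (by simp)
  choose w hw using hws
  have hwd : ∀ j j' : Fin 3, j ≠ j' → w j ≠ w j' := fun j j' hjj =>
    disj_ne hdisj (by simpa using hjj) (mem_of_eq_singleton (hw j))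
      (mem_of_eq_singleton (hw j'))
  have hadjw : ∀ j : Fin 3, Hg.Adj uu (w j) := fun j =>
    ss_adj hedge hu (hw j) (K33adj _ _)
  -- any vertex other than the w's is not adjacent to uu
  have hnadj : ∀ p : V8, p ≠ w 0 → p ≠ w 1 → p ≠ w 2 → ¬ Hg.Adj uu p := by
    intro p h0 h1 h2 h
    exact Hg_deg (hwd 0 1 (by decide)) (hwd 0 2 (by decide)) (fun e => h0 e.symm)
      (hwd 1 2 (by decide)) (fun e => h1 e.symm) (fun e => h2 e.symm)
      (hadjw 0) (hadjw 1) (hadjw 2) h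
  obtain ⟨p1, p2, hp12, hp⟩ := hP
  obtain ⟨q1, q2, hq12, hq⟩ := hQ
  have hadjP : Hg.Adj p1 p2 := adj_of_connected_pair hp12 (hp ▸ hconn (Sum.inl i1))
  have hadjQ : Hg.Adj q1 q2 := adj_of_connected_pair hq12 (hq ▸ hconn (Sum.inl i2))
  have hpm1 : p1 ∈ f (Sum.inl i1) := by rw [hp]; simp
  have hpm2 : p2 ∈ f (Sum.inl i1) := by rw [hp]; simp
  have hqm1 : q1 ∈ f (Sum.inl i2) := by rw [hq]; simp
  have hqm2 : q2 ∈ f (Sum.inl i2) := by rw [hq]; simp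
  have humem : uu ∈ f (Sum.inl i3) := mem_of_eq_singleton hu
  have h21 : (Sum.inl i2 : Fin 3 ⊕ Fin 3) ≠ Sum.inl i1 := by simpa using h12.symm
  have hwm : ∀ j, w j ∈ f (Sum.inr j) := fun j => mem_of_eq_singleton (hw j)
  refine Hg_B1 hadjP hadjQ (disj_ne hdisj h21 hqm1 hpm1) (disj_ne hdisj h21 hqm1 hpm2)
    (disj_ne hdisj h21 hqm2 hpm1) (disj_ne hdisj h21 hqm2 hpm2) hq12.symm
    (disj_ne hdisj (by simpa using h31) humem hpm1)
    (disj_ne hdisj (by simpa using h31) humem hpm2)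
    (disj_ne hdisj (by simpa using h32) humem hqm1)
    (disj_ne hdisj (by simpa using h32) humem hqm2)
    (hnadj _ (disj_ne hdisj (by simp) hpm1 (hwm 0)) (disj_ne hdisj (by simp) hpm1 (hwm 1))
      (disj_ne hdisj (by simp) hpm1 (hwm 2)))
    (hnadj _ (disj_ne hdisj (by simp) hpm2 (hwm 0)) (disj_ne hdisj (by simp) hpm2 (hwm 1))
      (disj_ne hdisj (by simp) hpm2 (hwm 2)))
    (hnadj _ (disj_ne hdisj (by simp) hqm1 (hwm 0)) (disj_ne hdisj (by simp) hqm1 (hwm 1))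
      (disj_ne hdisj (by simp) hqm1 (hwm 2)))
    (hnadj _ (disj_ne hdisj (by simp) hqm2 (hwm 0)) (disj_ne hdisj (by simp) hqm2 (hwm 1))
      (disj_ne hdisj (by simp) hqm2 (hwm 2)))

/-- case: exactly two non-singleton branch sets, both on the `W` side. -/
theorem K33_sameW {f : Fin 3 ⊕ Fin 3 → Set V8}
    (hconn : ∀ b, (Hg.induce (f b)).Connected)
    (hdisj : Pairwise fun b b' => Disjoint (f b) (f b'))
    (hedge : ∀ b b', (completeBipartiteGraph (Fin 3) (Fin 3)).Adj b b' →
      ∃ a ∈ f b, ∃ a' ∈ f b', Hg.Adj a a')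
    (j1 j2 : Fin 3) (h12 : j1 ≠ j2)
    (hsing : ∀ b, b ≠ Sum.inr j1 → b ≠ Sum.inr j2 → ∃ v, f b = {v})
    (hP : ∃ p q, p ≠ q ∧ f (Sum.inr j1) = {p, q})
    (hQ : ∃ p q, p ≠ q ∧ f (Sum.inr j2) = {p, q}) : False := by
  obtain ⟨j3, h31, h32⟩ :=
    (by decide : ∀ j1 j2 : Fin 3, j1 ≠ j2 → ∃ j3, j3 ≠ j1 ∧ j3 ≠ j2) j1 j2 h12
  obtain ⟨ww, hwsing⟩ := hsing (Sum.inr j3) (by simpa using h31) (by simpa using h32)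
  have hus : ∀ i : Fin 3, ∃ v, f (Sum.inl i) = {v} := fun i => hsing _ (by simp) (by simp)
  choose u hu using hus
  have hud : ∀ i i' : Fin 3, i ≠ i' → u i ≠ u i' := fun i i' hii =>
    disj_ne hdisj (by simpa using hii) (mem_of_eq_singleton (hu i))
      (mem_of_eq_singleton (hu i'))
  have hadju : ∀ i : Fin 3, Hg.Adj ww (u i) := fun i =>
    (ss_adj hedge (hu i) hwsing (K33adj _ _)).symm
  have hnadj : ∀ p : V8, p ≠ u 0 → p ≠ u 1 → p ≠ u 2 → ¬ Hg.Adj ww p := by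
    intro p h0 h1 h2 h
    exact Hg_deg (hud 0 1 (by decide)) (hud 0 2 (by decide)) (fun e => h0 e.symm)
      (hud 1 2 (by decide)) (fun e => h1 e.symm) (fun e => h2 e.symm)
      (hadju 0) (hadju 1) (hadju 2) h
  obtain ⟨p1, p2, hp12, hp⟩ := hP
  obtain ⟨q1, q2, hq12, hq⟩ := hQ
  have hadjP : Hg.Adj p1 p2 := adj_of_connected_pair hp12 (hp ▸ hconn (Sum.inr j1))
  have hadjQ : Hg.Adj q1 q2 := adj_of_connected_pair hq12 (hq ▸ hconn (Sum.inr j2))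
  have hpm1 : p1 ∈ f (Sum.inr j1) := by rw [hp]; simp
  have hpm2 : p2 ∈ f (Sum.inr j1) := by rw [hp]; simp
  have hqm1 : q1 ∈ f (Sum.inr j2) := by rw [hq]; simp
  have hqm2 : q2 ∈ f (Sum.inr j2) := by rw [hq]; simp
  have hwmem : ww ∈ f (Sum.inr j3) := mem_of_eq_singleton hwsing
  have h21 : (Sum.inr j2 : Fin 3 ⊕ Fin 3) ≠ Sum.inr j1 := by simpa using h12.symm
  have hum : ∀ i, u i ∈ f (Sum.inl i) := fun i => mem_of_eq_singleton (hu i)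
  refine Hg_B1 hadjP hadjQ (disj_ne hdisj h21 hqm1 hpm1) (disj_ne hdisj h21 hqm1 hpm2)
    (disj_ne hdisj h21 hqm2 hpm1) (disj_ne hdisj h21 hqm2 hpm2) hq12.symm
    (disj_ne hdisj (by simpa using h31) hwmem hpm1)
    (disj_ne hdisj (by simpa using h31) hwmem hpm2)
    (disj_ne hdisj (by simpa using h32) hwmem hqm1)
    (disj_ne hdisj (by simpa using h32) hwmem hqm2)
    (hnadj _ (disj_ne hdisj (by simp) hpm1 (hum 0)) (disj_ne hdisj (by simp) hpm1 (hum 1))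
      (disj_ne hdisj (by simp) hpm1 (hum 2)))
    (hnadj _ (disj_ne hdisj (by simp) hpm2 (hum 0)) (disj_ne hdisj (by simp) hpm2 (hum 1))
      (disj_ne hdisj (by simp) hpm2 (hum 2)))
    (hnadj _ (disj_ne hdisj (by simp) hqm1 (hum 0)) (disj_ne hdisj (by simp) hqm1 (hum 1))
      (disj_ne hdisj (by simp) hqm1 (hum 2)))
    (hnadj _ (disj_ne hdisj (by simp) hqm2 (hum 0)) (disj_ne hdisj (by simp) hqm2 (hum 1))
      (disj_ne hdisj (by simp) hqm2 (hum 2)))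

/-- case: two non-singleton branch sets, one on each side. -/
theorem K33_mixed {f : Fin 3 ⊕ Fin 3 → Set V8}
    (hconn : ∀ b, (Hg.induce (f b)).Connected)
    (hdisj : Pairwise fun b b' => Disjoint (f b) (f b'))
    (hedge : ∀ b b', (completeBipartiteGraph (Fin 3) (Fin 3)).Adj b b' →
      ∃ a ∈ f b, ∃ a' ∈ f b', Hg.Adj a a')
    (i1 j1 : Fin 3)
    (hsing : ∀ b, b ≠ Sum.inl i1 → b ≠ Sum.inr j1 → ∃ v, f b = {v})
    (hQ : ∃ p q, p ≠ q ∧ f (Sum.inr j1) = {p, q}) : False := by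
  obtain ⟨i2, i3, hi21, hi31, hi23⟩ :=
    (by decide : ∀ i1 : Fin 3, ∃ i2 i3, i2 ≠ i1 ∧ i3 ≠ i1 ∧ i2 ≠ i3) i1
  obtain ⟨j2, j3, hj21, hj31, hj23⟩ :=
    (by decide : ∀ j1 : Fin 3, ∃ j2 j3, j2 ≠ j1 ∧ j3 ≠ j1 ∧ j2 ≠ j3) j1
  obtain ⟨va, ha⟩ := hsing (Sum.inl i2) (by simpa using hi21) (by simp)
  obtain ⟨vb, hb⟩ := hsing (Sum.inl i3) (by simpa using hi31) (by simp)
  obtain ⟨vc, hc⟩ := hsing (Sum.inr j2) (by simp) (by simpa using hj21)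
  obtain ⟨vd, hd⟩ := hsing (Sum.inr j3) (by simp) (by simpa using hj31)
  obtain ⟨q1, q2, hq12, hq⟩ := hQ
  have hadjQ : Hg.Adj q1 q2 := adj_of_connected_pair hq12 (hq ▸ hconn (Sum.inr j1))
  have hma : va ∈ f (Sum.inl i2) := mem_of_eq_singleton ha
  have hmb : vb ∈ f (Sum.inl i3) := mem_of_eq_singleton hb
  have hmc : vc ∈ f (Sum.inr j2) := mem_of_eq_singleton hc
  have hmd : vd ∈ f (Sum.inr j3) := mem_of_eq_singleton hd
  -- the edges from the singleton `U`-sets to `Q`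
  obtain ⟨e1, he1, x, hx, hadjx⟩ := hedge (Sum.inl i2) (Sum.inr j1) (K33adj _ _)
  rw [ha, Set.mem_singleton_iff] at he1
  subst he1
  obtain ⟨e2, he2, y, hy, hadjy⟩ := hedge (Sum.inl i3) (Sum.inr j1) (K33adj _ _)
  rw [hb, Set.mem_singleton_iff] at he2
  subst he2
  have hBij : (Sum.inr j1 : Fin 3 ⊕ Fin 3) ≠ Sum.inl i3 := by simp
  obtain ⟨hxy, hnadj⟩ := Hg_B2
    (ss_adj hedge ha hc (K33adj _ _))
    (disj_ne hdisj (by simpa using hj23) hmc hmd)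
    (ss_adj hedge ha hd (K33adj _ _))
    (disj_ne hdisj (by simpa using hi23) hma hmb)
    (ss_adj hedge hb hc (K33adj _ _))
    (ss_adj hedge hb hd (K33adj _ _))
    hadjx.symm
    (disj_ne hdisj hBij hx hmb)
    (disj_ne hdisj (by simpa using hj21.symm) hx hmc)
    (disj_ne hdisj (by simpa using hj31.symm) hx hmd)
    hadjy.symm
    (disj_ne hdisj (by simp) hy hma)
    (disj_ne hdisj (by simpa using hj21.symm) hy hmc)
    (disj_ne hdisj (by simpa using hj31.symm) hy hmd)
  -- but `x` and `y` are the two elements of `Q`, which are adjacent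
  rw [hq] at hx hy
  rcases hx with rfl | hx2
  · rcases hy with rfl | hy2
    · exact hxy rfl
    · rw [Set.mem_singleton_iff] at hy2
      subst hy2
      exact hnadj hadjQ
  · rw [Set.mem_singleton_iff] at hx2
    subst hx2
    rcases hy with rfl | hy2
    · exact hnadj hadjQ.symm
    · rw [Set.mem_singleton_iff] at hy2
      subst hy2
      exact hxy rfl

theorem noK33 : ¬ HasMinor Hg (completeBipartiteGraph (Fin 3) (Fin 3)) := by
  rintro ⟨f, hne, hconn, hdisj, hedge⟩
  have h1 : ∀ b : Fin 3 ⊕ Fin 3, 1 ≤ ((Set.toFinite (f b)).toFinset).card :=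
    fun b => card_pos_of_nonempty (hne b)
  have hsum : ∑ b : Fin 3 ⊕ Fin 3, ((Set.toFinite (f b)).toFinset).card ≤ 8 :=
    sum_card_le hdisj
  by_cases htwo : ∃ b1 b2 : Fin 3 ⊕ Fin 3, b1 ≠ b2 ∧
      2 ≤ ((Set.toFinite (f b1)).toFinset).card ∧ 2 ≤ ((Set.toFinite (f b2)).toFinset).card
  · obtain ⟨b1, b2, hb12, h2a, h2b⟩ := htwo
    have e1 : ((Set.toFinite (f b1)).toFinset).card +
        ∑ b ∈ Finset.univ.erase b1, ((Set.toFinite (f b)).toFinset).card =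
        ∑ b : Fin 3 ⊕ Fin 3, ((Set.toFinite (f b)).toFinset).card :=
      Finset.add_sum_erase Finset.univ (fun b => ((Set.toFinite (f b)).toFinset).card) (Finset.mem_univ b1)
    have hb2m : b2 ∈ Finset.univ.erase b1 :=
      Finset.mem_erase.mpr ⟨hb12.symm, Finset.mem_univ _⟩
    have e2 : ((Set.toFinite (f b2)).toFinset).card +
        ∑ b ∈ (Finset.univ.erase b1).erase b2, ((Set.toFinite (f b)).toFinset).card =
        ∑ b ∈ Finset.univ.erase b1, ((Set.toFinite (f b)).toFinset).card :=
      Finset.add_sum_erase _ (fun b => ((Set.toFinite (f b)).toFinset).card) hb2m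
    have hcard2 : ((Finset.univ.erase b1).erase b2).card = 4 := by
      rw [Finset.card_erase_of_mem hb2m, Finset.card_erase_of_mem (Finset.mem_univ _),
        Finset.card_univ]
      rfl
    have hge : 4 ≤ ∑ b ∈ (Finset.univ.erase b1).erase b2,
        ((Set.toFinite (f b)).toFinset).card := by
      have := Finset.card_nsmul_le_sum ((Finset.univ.erase b1).erase b2)
        (fun b => ((Set.toFinite (f b)).toFinset).card) 1 (fun b _ => h1 b)
      rw [hcard2] at this
      simpa using this
    have hone : ∀ b, b ≠ b1 → b ≠ b2 → ((Set.toFinite (f b)).toFinset).card = 1 := by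
      intro b hB1 hB2
      have hbm : b ∈ (Finset.univ.erase b1).erase b2 := by
        exact Finset.mem_erase.mpr ⟨hB2, Finset.mem_erase.mpr ⟨hB1, Finset.mem_univ _⟩⟩
      have e3 : ((Set.toFinite (f b)).toFinset).card +
          ∑ b' ∈ ((Finset.univ.erase b1).erase b2).erase b,
            ((Set.toFinite (f b')).toFinset).card =
          ∑ b' ∈ (Finset.univ.erase b1).erase b2, ((Set.toFinite (f b')).toFinset).card :=
        Finset.add_sum_erase _ (fun b' => ((Set.toFinite (f b')).toFinset).card) hbm
      have hge3 : 3 ≤ ∑ b' ∈ ((Finset.univ.erase b1).erase b2).erase b,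
          ((Set.toFinite (f b')).toFinset).card := by
        have := Finset.card_nsmul_le_sum (((Finset.univ.erase b1).erase b2).erase b)
          (fun b' => ((Set.toFinite (f b')).toFinset).card) 1 (fun b' _ => h1 b')
        rw [Finset.card_erase_of_mem hbm, hcard2] at this
        simpa using this
      have h1b := h1 b
      omega
    have hax1 : ((Set.toFinite (f b1)).toFinset).card = 2 := by omega
    have hax2 : ((Set.toFinite (f b2)).toFinset).card = 2 := by omega
    have hsing : ∀ b, b ≠ b1 → b ≠ b2 → ∃ v, f b = {v} :=
      fun b hA hB => set_eq_singleton (hone b hA hB)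
    have hp1 := set_eq_pair hax1
    have hp2 := set_eq_pair hax2
    rcases b1 with i1 | j1 <;> rcases b2 with i2 | j2
    · exact K33_sameU hconn hdisj hedge i1 i2 (fun e => hb12 (by rw [e])) hsing hp1 hp2
    · exact K33_mixed hconn hdisj hedge i1 j2 hsing hp2
    · exact K33_mixed hconn hdisj hedge i2 j1 (fun b hA hB => hsing b hB hA) hp1
    · exact K33_sameW hconn hdisj hedge j1 j2 (fun e => hb12 (by rw [e])) hsing hp1 hp2
  · push_neg at htwo
    by_cases hbig : ∃ b0 : Fin 3 ⊕ Fin 3, 2 ≤ ((Set.toFinite (f b0)).toFinset).card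
    · obtain ⟨b0, hb0⟩ := hbig
      have hsing : ∀ b, b ≠ b0 → ∃ v, f b = {v} := by
        intro b hb
        have hlt := htwo b0 b (Ne.symm hb) hb0
        have := h1 b
        exact set_eq_singleton (by omega)
      rcases b0 with i0 | j0
      · exact K33_oneU hdisj hedge i0 hsing
      · exact K33_oneW hdisj hedge j0 hsing
    · push_neg at hbig
      have hsing : ∀ b : Fin 3 ⊕ Fin 3, ∃ v, f b = {v} := by
        intro b
        have := hbig b
        have := h1 b
        exact set_eq_singleton (by omega)
      exact K33_oneU hdisj hedge 0 (fun b _ => hsing b)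

/-! ### Localization of branch sets -/

theorem set_in_copy {k : ℕ} {c : Fin k} {S : Set (Vtk 3 k)} (hS : Sum.inr () ∉ S)
    (hconn : ((Gtk' 3 k).induce S).Connected) {x : Vtk 3 k}
    (hxS : x ∈ S) (hx : x ∈ cpy k c) : S ⊆ cpy k c := by
  intro y hy
  obtain ⟨p⟩ := hconn.preconnected ⟨y, hy⟩ ⟨x, hxS⟩
  exact walk_copy hS p hx

theorem copy_step {k : ℕ} {c : Fin k} {S T : Set (Vtk 3 k)} (hS : Sum.inr () ∉ S)
    (hconn : ((Gtk' 3 k).induce S).Connected) (hT : T ⊆ cpy k c)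
    {a a' : Vtk 3 k} (ha : a ∈ S) (ha' : a' ∈ T) (hadj : (Gtk' 3 k).Adj a a') :
    S ⊆ cpy k c := by
  obtain ⟨u', he⟩ := hT ha'
  subst he
  rcases a with ⟨ca, ua⟩ | t
  · obtain rfl : ca = c := adj_copy hadj
    exact set_in_copy hS hconn ha ⟨ua, rfl⟩
  · exact absurd ha hS

/-- transfer of a localized minor model from `Gtk' 3 k` to the 8-vertex graph `Hg`. -/
theorem hasMinor_Hg_of {k : ℕ} {β : Type} {K : SimpleGraph β}
    {f : β → Set (Vtk 3 k)}
    (hne : ∀ b, (f b).Nonempty)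
    (hconn : ∀ b, ((Gtk' 3 k).induce (f b)).Connected)
    (hdisj : Pairwise fun b b' => Disjoint (f b) (f b'))
    (hedge : ∀ b b', K.Adj b b' → ∃ a ∈ f b, ∃ a' ∈ f b', (Gtk' 3 k).Adj a a')
    (c : Fin k) (hloc : ∀ b, Sum.inr () ∉ f b → f b ⊆ cpy k c) :
    HasMinor Hg K := by
  classical
  let g : β → Set (Vtk 3 k) := fun b =>
    if Sum.inr () ∈ f b then insert (Sum.inr ()) (f b ∩ cpy k c) else f b
  have hgsub : ∀ b, ∀ x ∈ g b, x = Sum.inr () ∨ x ∈ cpy k c := by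
    intro b x hx
    by_cases hb : Sum.inr () ∈ f b
    · rw [show g b = insert (Sum.inr ()) (f b ∩ cpy k c) from if_pos hb] at hx
      rcases hx with rfl | ⟨-, hx2⟩
      · exact Or.inl rfl
      · exact Or.inr hx2
    · rw [show g b = f b from if_neg hb] at hx
      exact Or.inr (hloc b hb hx)
  refine ⟨fun b => phi k c ⁻¹' (g b), ?_, ?_, ?_, ?_⟩
  · intro b
    by_cases hb : Sum.inr () ∈ f b
    · refine ⟨Sum.inr (), ?_⟩
      show phi k c (Sum.inr ()) ∈ g b
      rw [show g b = insert (Sum.inr ()) (f b ∩ cpy k c) from if_pos hb]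
      exact Set.mem_insert _ _
    · obtain ⟨x, hx⟩ := hne b
      obtain ⟨u, rfl⟩ := hloc b hb hx
      refine ⟨Sum.inl u, ?_⟩
      show phi k c (Sum.inl u) ∈ g b
      rw [show g b = f b from if_neg hb]
      exact hx
  · intro b
    refine connected_pull (hgsub b) ?_
    by_cases hb : Sum.inr () ∈ f b
    · rw [show g b = insert (Sum.inr ()) (f b ∩ cpy k c) from if_pos hb]
      exact connected_s_part (hconn b) hb
    · rw [show g b = f b from if_neg hb]
      exact hconn b
  · intro b b' hbb'
    refine Disjoint.preimage _ (Set.disjoint_left.mpr ?_)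
    intro x hx hx'
    by_cases hb : Sum.inr () ∈ f b <;> by_cases hb' : Sum.inr () ∈ f b'
    · exact Set.disjoint_left.mp (hdisj hbb') hb hb'
    · rw [show g b = insert (Sum.inr ()) (f b ∩ cpy k c) from if_pos hb] at hx
      rw [show g b' = f b' from if_neg hb'] at hx'
      rcases hx with rfl | ⟨hx1, -⟩
      · exact hb' hx'
      · exact Set.disjoint_left.mp (hdisj hbb') hx1 hx'
    · rw [show g b = f b from if_neg hb] at hx
      rw [show g b' = insert (Sum.inr ()) (f b' ∩ cpy k c) from if_pos hb'] at hx'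
      rcases hx' with rfl | ⟨hx1, -⟩
      · exact hb hx
      · exact Set.disjoint_left.mp (hdisj hbb') hx hx1
    · rw [show g b = f b from if_neg hb] at hx
      rw [show g b' = f b' from if_neg hb'] at hx'
      exact Set.disjoint_left.mp (hdisj hbb') hx hx'
  · intro b b' hK'
    obtain ⟨a, ha, a', ha', hadj⟩ := hedge b b' hK'
    have key : a ∈ g b ∧ a' ∈ g b' := by
      by_cases hb : Sum.inr () ∈ f b <;> by_cases hb' : Sum.inr () ∈ f b'
      · exact absurd (Set.disjoint_left.mp (hdisj hK'.ne) hb hb') (fun h => h)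
      · -- s ∈ f b, s ∉ f b' : localize a' then step to a
        obtain ⟨u', he'⟩ := hloc b' hb' ha'
        subst he'
        rw [show g b' = f b' from if_neg hb']
        refine ⟨?_, ha'⟩
        rw [show g b = insert (Sum.inr ()) (f b ∩ cpy k c) from if_pos hb]
        rcases adj_step hadj.symm with rfl | ⟨u2, rfl⟩
        · exact Set.mem_insert _ _
        · exact Set.mem_insert_iff.mpr (Or.inr ⟨ha, ⟨u2, rfl⟩⟩)
      · obtain ⟨u, he⟩ := hloc b hb ha
        subst he
        rw [show g b = f b from if_neg hb]
        refine ⟨ha, ?_⟩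
        rw [show g b' = insert (Sum.inr ()) (f b' ∩ cpy k c) from if_pos hb']
        rcases adj_step hadj with rfl | ⟨u2, rfl⟩
        · exact Set.mem_insert _ _
        · exact Set.mem_insert_iff.mpr (Or.inr ⟨ha', ⟨u2, rfl⟩⟩)
      · rw [show g b = f b from if_neg hb, show g b' = f b' from if_neg hb']
        exact ⟨ha, ha'⟩
    obtain ⟨hga, hga'⟩ := key
    have hpa : phi k c (psi k a) = a := phi_psi (hgsub b a hga)
    have hpa' : phi k c (psi k a') = a' := phi_psi (hgsub b' a' hga')
    refine ⟨psi k a, ?_, psi k a', ?_, ?_⟩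
    · show phi k c (psi k a) ∈ g b
      rw [hpa]; exact hga
    · show phi k c (psi k a') ∈ g b'
      rw [hpa']; exact hga'
    · refine (adj_phi c _ _).mp ?_
      rw [hpa, hpa']
      exact hadj

/-! ### The main theorem -/

theorem G3k_planar (k : ℕ) (hk : 1 ≤ k) : Planar (Gtk' 3 k) := by
  constructor
  · rintro ⟨f, hne, hconn, hdisj, hedge⟩
    have honeS : ∀ b b' : Fin 5, Sum.inr () ∈ f b → Sum.inr () ∈ f b' → b = b' := by
      intro b b' hb hb'
      by_contra h
      exact Set.disjoint_left.mp (hdisj h) hb hb'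
    have hb1 : ∃ b1 : Fin 5, Sum.inr () ∉ f b1 := by
      by_contra h
      push_neg at h
      exact absurd (honeS 0 1 (h 0) (h 1)) (by decide)
    obtain ⟨b1, hb1⟩ := hb1
    obtain ⟨x, hx⟩ := hne b1
    rcases x with ⟨c, u⟩ | t
    · have hT : f b1 ⊆ cpy k c := set_in_copy hb1 (hconn b1) hx ⟨u, rfl⟩
      have hloc : ∀ b, Sum.inr () ∉ f b → f b ⊆ cpy k c := by
        intro b hb
        by_cases hbb : b = b1
        · subst hbb; exact hT
        · obtain ⟨a, ha, a', ha', hadj⟩ := hedge b b1 hbb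
          exact copy_step hb (hconn b) hT ha ha' hadj
      exact noK5 (hasMinor_Hg_of hne hconn hdisj hedge c hloc)
    · exact hb1 hx
  · rintro ⟨f, hne, hconn, hdisj, hedge⟩
    have honeS : ∀ b b' : Fin 3 ⊕ Fin 3,
        Sum.inr () ∈ f b → Sum.inr () ∈ f b' → b = b' := by
      intro b b' hb hb'
      by_contra h
      exact Set.disjoint_left.mp (hdisj h) hb hb'
    have hj1 : ∃ j1 : Fin 3, Sum.inr () ∉ f (Sum.inr j1) := by
      by_contra h
      push_neg at h
      have := honeS (Sum.inr 0) (Sum.inr 1) (h 0) (h 1)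
      simp at this
    obtain ⟨j1, hj1⟩ := hj1
    have hi1 : ∃ i1 : Fin 3, Sum.inr () ∉ f (Sum.inl i1) := by
      by_contra h
      push_neg at h
      have := honeS (Sum.inl 0) (Sum.inl 1) (h 0) (h 1)
      simp at this
    obtain ⟨i1, hi1⟩ := hi1
    obtain ⟨x, hx⟩ := hne (Sum.inr j1)
    rcases x with ⟨c, u⟩ | t
    · have hTj1 : f (Sum.inr j1) ⊆ cpy k c :=
        set_in_copy hj1 (hconn _) hx ⟨u, rfl⟩
      have hU : ∀ i : Fin 3, Sum.inr () ∉ f (Sum.inl i) → f (Sum.inl i) ⊆ cpy k c := by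
        intro i hi
        obtain ⟨a, ha, a', ha', hadj⟩ := hedge (Sum.inl i) (Sum.inr j1) (K33adj _ _)
        exact copy_step hi (hconn _) hTj1 ha ha' hadj
      have hi1sub := hU i1 hi1
      have hW : ∀ j : Fin 3, Sum.inr () ∉ f (Sum.inr j) → f (Sum.inr j) ⊆ cpy k c := by
        intro j hj
        obtain ⟨a, ha, a', ha', hadj⟩ := hedge (Sum.inl i1) (Sum.inr j) (K33adj _ _)
        exact copy_step hj (hconn _) hi1sub ha' ha hadj.symm
      have hloc : ∀ b, Sum.inr () ∉ f b → f b ⊆ cpy k c := by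
        rintro (i | j) hb
        · exact hU i hb
        · exact hW j hb
      exact noK33 (hasMinor_Hg_of hne hconn hdisj hedge c hloc)
    · exact hj1 hx
end
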